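/- arXiv:2410.13008 — 6 statements merged into one kernel-verified Lean document; each statement's English description precedes it below -/
import Mathlib

section
/- Every safely buildable digraph is unbreakable, 3-cyclic and diwheel-free. -/
namespace Cyclic3

variable {V : Type*}

/-- `l` (a nonempty list of distinct vertices) is a directed cycle of the digraph `G`;
its length (number of edges) is `l.length`. -/
def IsDicycle (G : V → V → Prop) (l : List V) : Prop :=
  l ≠ [] ∧ l.Nodup ∧ ∀ p ∈ l.zip (l.rotate 1), G p.1 p.2

/-- every directed cycle of `G` has length exactly `ℓ`. -/
def IsLCyclic (G : V → V → Prop) (ℓ : ℕ) : Prop :=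
  ∀ l : List V, IsDicycle G l → l.length = ℓ

/-- every directed cycle of `G` has length a multiple of `ℓ`. -/
def CyclesLenDvd (G : V → V → Prop) (ℓ : ℕ) : Prop :=
  ∀ l : List V, IsDicycle G l → ℓ ∣ l.length

/-- `l` is a directed walk from `u` to `v` in `G`; its length (number of edges)
is `l.length - 1`. -/
def IsDiwalk (G : V → V → Prop) (u v : V) (l : List V) : Prop :=
  l.head? = some u ∧ l.getLast? = some v ∧ l.Chain' G

def StronglyConnected (G : V → V → Prop) : Prop :=
  Nonempty V ∧ ∀ u v : V, ∃ l : List V, IsDiwalk G u v l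

/-- the underlying undirected graph `G⁻` of a digraph. -/
def underlying (G : V → V → Prop) : SimpleGraph V where
  Adj a b := a ≠ b ∧ (G a b ∨ G b a)
  symm := ⟨fun _ _ h => ⟨h.1.symm, h.2.symm⟩⟩
  loopless := ⟨fun _ h => h.1 rfl⟩

/-- 2-connectedness of an undirected graph. -/
def TwoConnected (H : SimpleGraph V) : Prop :=
  3 ≤ Nat.card V ∧ ∀ v : V, (H.induce {w : V | w ≠ v}).Connected

/-- strongly connected and weakly 2-connected. -/
def Unbreakable (G : V → V → Prop) : Prop :=
  StronglyConnected G ∧ TwoConnected (underlying G)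

/-- an (undirected) walk from `u` to `v` in the underlying graph of `G`. -/
def UWalk (G : V → V → Prop) (u v : V) (l : List V) : Prop :=
  l.head? = some u ∧ l.getLast? = some v ∧ l.Chain' fun a b => G a b ∨ G b a

/-- `B` is (the vertex set of) a connected component of the graph `H` restricted
to the vertex set `s`. -/
def IsCompOf (H : SimpleGraph V) (s B : Set V) : Prop :=
  B.Nonempty ∧ B ⊆ s ∧ (H.induce B).Connected ∧
    ∀ x ∈ B, ∀ y ∈ s, H.Adj x y → y ∈ B

/-- `G` contains a diwheel as a subdigraph: a hub `v` and an (even) rim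
`a 0, b 0, a 1, b 1, …` (given as a list `r` of pairs, of length at least two),
each rim edge making a tricycle with the hub. -/
def HasDiwheel (G : V → V → Prop) : Prop :=
  ∃ (v : V) (r : List (V × V)),
    2 ≤ r.length ∧
    (v :: (r.map Prod.fst ++ r.map Prod.snd)).Nodup ∧
    (∀ p ∈ r, G p.1 p.2 ∧ G p.2 v ∧ G v p.1) ∧
    ∀ q ∈ r.zip (r.rotate 1), G q.2.1 q.1.2

/-- `{a,b,c}` is the vertex set of a tricycle (a directed cycle of length three). -/
def IsTricycle (G : V → V → Prop) (a b c : V) : Prop :=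
  a ≠ b ∧ b ≠ c ∧ a ≠ c ∧
    ((G a b ∧ G b c ∧ G c a) ∨ (G b a ∧ G c b ∧ G a c))

/-- `uv` is a special edge of the digraph `H`: it is an edge, and either `u` has
out-degree one or `v` has in-degree one. -/
def SpecialEdge (H : V → V → Prop) (u v : V) : Prop :=
  H u v ∧ ({w | H u w}.ncard = 1 ∨ {w | H w v}.ncard = 1)

/-- `A 0, …, A (ℓ-1)` is an `ℓ`-ring of `G`: an ordered partition of the vertex set
such that every edge goes from some `A i` to `A (i+1)` (indices mod `ℓ`). -/
def IsRing (G : V → V → Prop) (ℓ : ℕ) (A : ℕ → Set V) : Prop :=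
  (∀ v : V, ∃! i, i < ℓ ∧ v ∈ A i) ∧
  ∀ u v, G u v → ∃ i < ℓ, u ∈ A i ∧ v ∈ A ((i + 1) % ℓ)

/-- `w` is a weighting: every directed cycle has total weight one. -/
def IsWeighting (G : V → V → Prop) (w : V → V → ℝ) : Prop :=
  ∀ l : List V, IsDicycle G l →
    ((l.zip (l.rotate 1)).map fun p => w p.1 p.2).sum = 1

/-- an ear for the subdigraph `H` (with vertex set `S`) in `G`: a directed path of `G`
of length at least one, with both ends in `S`, no internal vertex in `S`,
and no edge of `H`. -/
def IsEar (G H : V → V → Prop) (S : Set V) : Prop :=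
  ∃ (u v : V) (m : List V),
    u ∈ S ∧ v ∈ S ∧ (∀ x ∈ m, x ∉ S) ∧
    (u :: m ++ [v]).Nodup ∧ (u :: m ++ [v]).Chain' G ∧
    (u :: m ++ [v]).Chain' fun a b => ¬ H a b

/-- `SafelyBuildable s G` : the digraph `G`, with vertex set `s`, can be built
starting from a tricycle by repeatedly choosing a vertex `v` of in-degree and
out-degree one, a neighbour `u` of `v`, and adding a nonempty set `t` of new
vertices, each of degree two, each making a tricycle with `u` and `v`. -/
inductive SafelyBuildable : Set V → (V → V → Prop) → Prop
  | base (x y z : V) : x ≠ y → y ≠ z → x ≠ z →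
      SafelyBuildable {x, y, z}
        (fun a b => (a = x ∧ b = y) ∨ (a = y ∧ b = z) ∨ (a = z ∧ b = x))
  | stepOut (s t : Set V) (G : V → V → Prop) (u v : V) :
      SafelyBuildable s G → u ∈ s → v ∈ s →
      (∃! w, G v w) → (∃! w, G w v) → G u v →
      t.Nonempty → (∀ w ∈ t, w ∉ s) →
      SafelyBuildable (s ∪ t)
        (fun a b => G a b ∨ (a = v ∧ b ∈ t) ∨ (a ∈ t ∧ b = u))
  | stepIn (s t : Set V) (G : V → V → Prop) (u v : V) :
      SafelyBuildable s G → u ∈ s → v ∈ s →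
      (∃! w, G v w) → (∃! w, G w v) → G v u →
      t.Nonempty → (∀ w ∈ t, w ∉ s) →
      SafelyBuildable (s ∪ t)
        (fun a b => G a b ∨ (a = u ∧ b ∈ t) ∨ (a ∈ t ∧ b = v))


section Helpers

open Relation

theorem rtg_diwalk {G : V → V → Prop} {u v : V} (h : Relation.ReflTransGen G u v) :
    ∃ l, IsDiwalk G u v l := by
  induction h with
  | refl => exact ⟨[u], rfl, rfl, List.isChain_singleton u⟩
  | tail hbc hG ih =>
    obtain ⟨l, h1, h2, h3⟩ := ih
    refine ⟨l ++ [_], ?_, List.getLast?_concat, ?_⟩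
    · cases l with
      | nil => simp at h1
      | cons a l => simpa using h1
    · show List.IsChain G (l ++ [_])
      rw [List.isChain_append]
      refine ⟨h3, List.isChain_singleton _, ?_⟩
      intro x hx y hy
      simp only [List.head?_cons, Option.mem_def, Option.some.injEq] at hy
      rw [h2] at hx
      cases hx; cases hy; exact hG

theorem zip_rotate_get {α : Type*} {R : α → α → Prop} {l : List α}
    (h : ∀ p ∈ l.zip (l.rotate 1), R p.1 p.2) (j : ℕ) (hj : j < l.length) :
    R (l.get ⟨j, hj⟩) (l.get ⟨(j+1) % l.length, Nat.mod_lt _ (by omega)⟩) := by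
  have hlen : (l.zip (l.rotate 1)).length = l.length := by
    simp [List.length_zip]
  have hjz : j < (l.zip (l.rotate 1)).length := by omega
  have := h ((l.zip (l.rotate 1)).get ⟨j, hjz⟩) (List.get_mem _ _)
  simp only [List.get_eq_getElem, List.getElem_zip, List.getElem_rotate] at this
  simp only [List.get_eq_getElem]
  convert this using 3

theorem dicycle_f {G : V → V → Prop} {l : List V} (h : IsDicycle G l) :
    ∃ (n : ℕ) (f : ℕ → V), n = l.length ∧ 0 < n ∧
      (∀ j, G (f j) (f (j+1))) ∧
      (∀ j k, f j = f k → j % n = k % n) ∧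
      (∀ j k, j % n = k % n → f j = f k) ∧
      (∀ j, f j ∈ l) ∧
      (∀ x ∈ l, ∃ j, f j = x) := by
  obtain ⟨hne, hnd, hzip⟩ := h
  have hn : 0 < l.length := List.length_pos_iff.mpr hne
  refine ⟨l.length, fun j => l.get ⟨j % l.length, Nat.mod_lt _ hn⟩, rfl, hn, ?_, ?_, ?_, ?_, ?_⟩
  · intro j
    have := zip_rotate_get hzip (j % l.length) (Nat.mod_lt _ hn)
    have e : (⟨(j % l.length + 1) % l.length, Nat.mod_lt _ hn⟩ : Fin l.length)
        = ⟨(j+1) % l.length, Nat.mod_lt _ hn⟩ := Fin.ext (Nat.mod_add_mod _ _ _)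
    rwa [e] at this
  · intro j k hjk
    have := hnd.get_inj_iff.mp hjk
    simpa using congrArg Fin.val this
  · intro j k e
    exact congrArg l.get (Fin.ext e)
  · intro j; exact List.get_mem _ _
  · intro x hx
    obtain ⟨i, hi, rfl⟩ := List.mem_iff_get.mp hx
    exact ⟨i.val, by simp [Nat.mod_eq_of_lt i.isLt]⟩

theorem map_get_ne {α β : Type*} {g : α → β} {r : List α} (hnd : (r.map g).Nodup)
    {i j : ℕ} (hi : i < r.length) (hj : j < r.length) (hij : i ≠ j) :
    g (r.get ⟨i, hi⟩) ≠ g (r.get ⟨j, hj⟩) := by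
  intro h
  have hi' : i < (r.map g).length := by simpa
  have hj' : j < (r.map g).length := by simpa
  have he : (r.map g).get ⟨i, hi'⟩ = (r.map g).get ⟨j, hj'⟩ := by
    simpa using h
  exact hij (by simpa using congrArg Fin.val (hnd.get_inj_iff.mp he))

theorem lcyclic_ne {G : V → V → Prop} (h3 : IsLCyclic G 3) {a b : V} (h : G a b) :
    a ≠ b := by
  rintro rfl
  have hd : IsDicycle G [a] := by
    refine ⟨by simp, by simp, ?_⟩
    intro p hp
    simp [List.rotate_singleton] at hp
    subst hp
    exact h
  have := h3 [a] hd
  simp at this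

theorem rtg_ne_of_rel {S : V → V → Prop} {z x y : V}
    (h : Relation.ReflTransGen (fun p q => q ≠ z ∧ S p q) x y) : x = y ∨ y ≠ z := by
  induction h with
  | refl => exact Or.inl rfl
  | tail _ h₂ _ => exact Or.inr h₂.1

theorem rtg_rev {S : V → V → Prop} (hS : ∀ a b, S a b → S b a) {z x y : V}
    (h : Relation.ReflTransGen (fun p q => q ≠ z ∧ S p q) x y) (hx : x ≠ z) :
    Relation.ReflTransGen (fun p q => q ≠ z ∧ S p q) y x := by
  induction h with
  | refl => exact ReflTransGen.refl
  | @tail b c h₁ h₂ ih =>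
    have hb : b ≠ z := by
      rcases rtg_ne_of_rel h₁ with e | e
      · exact e ▸ hx
      · exact e
    exact (ReflTransGen.single ⟨hb, hS _ _ h₂.2⟩).trans ih

theorem rtg_reachable {H : SimpleGraph V} {z a b : V}
    (h : Relation.ReflTransGen (fun p q => q ≠ z ∧ H.Adj p q) a b)
    (ha : a ≠ z) :
    ∀ hb : b ≠ z, (H.induce {w | w ≠ z}).Reachable ⟨a, ha⟩ ⟨b, hb⟩ := by
  induction h with
  | refl => intro hb; exact SimpleGraph.Reachable.refl _
  | @tail b c h₁ h₂ ih =>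
    intro hc
    have hb : b ≠ z := by
      rcases rtg_ne_of_rel h₁ with e | e
      · exact e ▸ ha
      · exact e
    exact (ih hb).trans (SimpleGraph.Adj.reachable
      (show (H.induce {w | w ≠ z}).Adj ⟨b, hb⟩ ⟨c, hc⟩ from h₂.2))

theorem rtg_sc_ext {s t : Set V} {p q : V} (hp : p ∈ s) (hq : q ∈ s)
    {G G' : V → V → Prop} (hmono : ∀ a b, G a b → G' a b)
    (hpw : ∀ w ∈ t, G' p w) (hwq : ∀ w ∈ t, G' w q)
    (IH : ∀ a ∈ s, ∀ b ∈ s, Relation.ReflTransGen G a b) :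
    ∀ a ∈ s ∪ t, ∀ b ∈ s ∪ t, Relation.ReflTransGen G' a b := by
  have IH' : ∀ a ∈ s, ∀ b ∈ s, Relation.ReflTransGen G' a b :=
    fun a ha b hb => Relation.ReflTransGen.mono (fun a b => hmono a b) a b (IH a ha b hb)
  intro a ha b hb
  rcases ha with ha | ha <;> rcases hb with hb | hb
  · exact IH' a ha b hb
  · exact (IH' a ha p hp).trans (ReflTransGen.single (hpw b hb))
  · exact (ReflTransGen.single (hwq a ha)).trans (IH' q hq b hb)
  · exact (ReflTransGen.single (hwq a ha)).trans
      ((IH' q hq p hp).trans (ReflTransGen.single (hpw b hb)))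

theorem rtg_tc_ext {s t : Set V} {u v : V} (hu : u ∈ s) (hv : v ∈ s) (huv : u ≠ v)
    {U U' : V → V → Prop} (hsym : ∀ a b, U' a b → U' b a)
    (hmono : ∀ a b, U a b → U' a b)
    (hwu : ∀ w ∈ t, U' w u) (hwv : ∀ w ∈ t, U' w v)
    (IH : ∀ z : V, ∀ a ∈ s, a ≠ z → ∀ b ∈ s, b ≠ z →
      Relation.ReflTransGen (fun p q => q ≠ z ∧ U p q) a b) :
    ∀ z : V, ∀ a ∈ s ∪ t, a ≠ z → ∀ b ∈ s ∪ t, b ≠ z →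
      Relation.ReflTransGen (fun p q => q ≠ z ∧ U' p q) a b := by
  intro z
  have hIH' : ∀ a ∈ s, a ≠ z → ∀ b ∈ s, b ≠ z →
      Relation.ReflTransGen (fun p q => q ≠ z ∧ U' p q) a b :=
    fun a ha haz b hb hbz =>
      Relation.ReflTransGen.mono (p := fun p q => q ≠ z ∧ U' p q)
        (fun p q (h : q ≠ z ∧ U p q) => ⟨h.1, hmono p q h.2⟩) a b (IH z a ha haz b hb hbz)
  have key : ∀ w ∈ t, ∀ b ∈ s, b ≠ z →
      Relation.ReflTransGen (fun p q => q ≠ z ∧ U' p q) w b := by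
    intro w hw b hb hbz
    by_cases hzu : z = u
    · have hvz : v ≠ z := fun e => huv ((e.trans hzu).symm)
      exact (ReflTransGen.single ⟨hvz, hwv w hw⟩).trans (hIH' v hv hvz b hb hbz)
    · have huz : u ≠ z := fun e => hzu e.symm
      exact (ReflTransGen.single ⟨huz, hwu w hw⟩).trans (hIH' u hu huz b hb hbz)
  intro a ha haz b hb hbz
  rcases ha with ha | ha <;> rcases hb with hb | hb
  · exact hIH' a ha haz b hb hbz
  · exact rtg_rev hsym (key b hb a ha haz) hbz
  · exact key a ha b hb hbz
  · by_cases hzu : z = u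
    · have hvz : v ≠ z := fun e => huv ((e.trans hzu).symm)
      exact (ReflTransGen.single ⟨hvz, hwv a ha⟩).trans
        (rtg_rev hsym (ReflTransGen.single ⟨hvz, hwv b hb⟩) hbz)
    · have huz : u ≠ z := fun e => hzu e.symm
      exact (ReflTransGen.single ⟨huz, hwu a ha⟩).trans
        (rtg_rev hsym (ReflTransGen.single ⟨huz, hwu b hb⟩) hbz)

end Helpers

section Ext

open Relation

theorem isLCyclic_ext_out {G G' : V → V → Prop} {s t : Set V} {u v : V}
    (hGs : ∀ a b, G a b → a ∈ s ∧ b ∈ s)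
    (hts : ∀ w ∈ t, w ∉ s) (hus : u ∈ s) (hvs : v ∈ s) (hvu : v ≠ u)
    (hG' : ∀ a b, G' a b ↔ (G a b ∨ (a = v ∧ b ∈ t) ∨ (a ∈ t ∧ b = u)))
    (hinv : ∀ a, G a v → a = u)
    (hcyc : IsLCyclic G 3) : IsLCyclic G' 3 := by
  have hpred : ∀ a b, G' a b → b ∈ t → a = v := by
    intro a b hab hbt
    rcases (hG' a b).mp hab with h | ⟨h1, _⟩ | ⟨_, h2⟩
    · exact absurd (hGs a b h).2 (hts b hbt)
    · exact h1
    · exact absurd (h2 ▸ hus) (hts b hbt)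
  have hsucc : ∀ a b, G' a b → a ∈ t → b = u := by
    intro a b hab hat
    rcases (hG' a b).mp hab with h | ⟨h1, _⟩ | ⟨_, h2⟩
    · exact absurd (hGs a b h).1 (hts a hat)
    · exact absurd (h1 ▸ hvs) (hts a hat)
    · exact h2
  have hintov : ∀ a, G' a v → a = u := by
    intro a hav
    rcases (hG' a v).mp hav with h | ⟨_, h2⟩ | ⟨_, h2⟩
    · exact hinv a h
    · exact absurd hvs (hts v h2)
    · exact absurd h2 hvu
  intro l hl
  by_cases hlt : ∀ x ∈ l, x ∉ t
  · apply hcyc l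
    refine ⟨hl.1, hl.2.1, ?_⟩
    intro pp hp
    have hmem := List.of_mem_zip (a := pp.1) (b := pp.2) hp
    have h2 : pp.2 ∈ l := List.mem_rotate.mp hmem.2
    rcases (hG' pp.1 pp.2).mp (hl.2.2 pp hp) with h | ⟨_, hbt⟩ | ⟨hat, _⟩
    · exact h
    · exact absurd hbt (hlt pp.2 h2)
    · exact absurd hat (hlt pp.1 hmem.1)
  · push_neg at hlt
    obtain ⟨w, hwl, hwt⟩ := hlt
    obtain ⟨n, f, hn, hn0, hf, hinj, hcng, hmemf, hsurj⟩ := dicycle_f hl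
    obtain ⟨i, hfi⟩ := hsurj w hwl
    have hit : f i ∈ t := hfi ▸ hwt
    rw [← hn]
    have hfi1 : f (i+1) = u := hsucc _ _ (hf i) hit
    by_cases h1 : n = 1
    · have e : f (i+1) = f i := hcng _ _ (by simp [h1])
      exact absurd hus (hts u (by rw [← hfi1, e]; exact hit))
    by_cases h2 : n = 2
    · have e : f (i+2) = f i := hcng _ _ (by rw [h2]; omega)
      have : f (i+1) = v := hpred _ _ (hf (i+1)) (by rw [e]; exact hit)
      exact absurd (this ▸ hfi1) hvu
    have h3 : 3 ≤ n := by omega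
    have hfn : f (i+n-1+1) = f i := by
      rw [show i+n-1+1 = i+n from by omega]
      exact hcng _ _ (Nat.add_mod_right i n)
    have e1 : f (i+n-1) = v := hpred _ _ (hf (i+n-1)) (by rw [hfn]; exact hit)
    have e2 : f (i+n-2) = u := by
      apply hintov
      have := hf (i+n-2)
      rwa [show i+n-2+1 = i+n-1 from by omega, e1] at this
    have hmod : (i+1) % n = (i+n-2) % n := hinj _ _ (hfi1.trans e2.symm)
    have hd : n ∣ (i+n-2) - (i+1) := (Nat.modEq_iff_dvd' (by omega)).mp hmod
    have he : (i+n-2) - (i+1) = n - 3 := by omega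
    rw [he] at hd
    rcases Nat.eq_zero_or_pos (n-3) with h0 | hpos
    · omega
    · exact absurd (Nat.le_of_dvd hpos hd) (by omega)

theorem isLCyclic_ext_in {G G' : V → V → Prop} {s t : Set V} {u v : V}
    (hGs : ∀ a b, G a b → a ∈ s ∧ b ∈ s)
    (hts : ∀ w ∈ t, w ∉ s) (hus : u ∈ s) (hvs : v ∈ s) (hvu : v ≠ u)
    (hG' : ∀ a b, G' a b ↔ (G a b ∨ (a = u ∧ b ∈ t) ∨ (a ∈ t ∧ b = v)))
    (hout : ∀ b, G v b → b = u)
    (hcyc : IsLCyclic G 3) : IsLCyclic G' 3 := by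
  have hpred : ∀ a b, G' a b → b ∈ t → a = u := by
    intro a b hab hbt
    rcases (hG' a b).mp hab with h | ⟨h1, _⟩ | ⟨_, h2⟩
    · exact absurd (hGs a b h).2 (hts b hbt)
    · exact h1
    · exact absurd (h2 ▸ hvs) (hts b hbt)
  have hsucc : ∀ a b, G' a b → a ∈ t → b = v := by
    intro a b hab hat
    rcases (hG' a b).mp hab with h | ⟨h1, _⟩ | ⟨_, h2⟩
    · exact absurd (hGs a b h).1 (hts a hat)
    · exact absurd (h1 ▸ hus) (hts a hat)
    · exact h2
  have houtv : ∀ b, G' v b → b = u := by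
    intro b hvb
    rcases (hG' v b).mp hvb with h | ⟨h1, _⟩ | ⟨h1, _⟩
    · exact hout b h
    · exact absurd h1 hvu
    · exact absurd hvs (hts v h1)
  intro l hl
  by_cases hlt : ∀ x ∈ l, x ∉ t
  · apply hcyc l
    refine ⟨hl.1, hl.2.1, ?_⟩
    intro pp hp
    have hmem := List.of_mem_zip (a := pp.1) (b := pp.2) hp
    have h2 : pp.2 ∈ l := List.mem_rotate.mp hmem.2
    rcases (hG' pp.1 pp.2).mp (hl.2.2 pp hp) with h | ⟨_, hbt⟩ | ⟨hat, _⟩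
    · exact h
    · exact absurd hbt (hlt pp.2 h2)
    · exact absurd hat (hlt pp.1 hmem.1)
  · push_neg at hlt
    obtain ⟨w, hwl, hwt⟩ := hlt
    obtain ⟨n, f, hn, hn0, hf, hinj, hcng, hmemf, hsurj⟩ := dicycle_f hl
    obtain ⟨i, hfi⟩ := hsurj w hwl
    have hit : f i ∈ t := hfi ▸ hwt
    rw [← hn]
    have hfi1 : f (i+1) = v := hsucc _ _ (hf i) hit
    by_cases h1 : n = 1
    · have e : f (i+1) = f i := hcng _ _ (by simp [h1])
      exact absurd hvs (hts v (by rw [← hfi1, e]; exact hit))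
    have hfi2 : f (i+2) = u := by
      apply houtv
      have := hf (i+1)
      rwa [hfi1] at this
    by_cases h2 : n = 2
    · have e : f (i+2) = f i := hcng _ _ (by rw [h2]; omega)
      exact absurd hus (hts u (by rw [← hfi2, e]; exact hit))
    have h3 : 3 ≤ n := by omega
    have hfn : f (i+n-1+1) = f i := by
      rw [show i+n-1+1 = i+n from by omega]
      exact hcng _ _ (Nat.add_mod_right i n)
    have e1 : f (i+n-1) = u := hpred _ _ (hf (i+n-1)) (by rw [hfn]; exact hit)
    have hmod : (i+2) % n = (i+n-1) % n := hinj _ _ (hfi2.trans e1.symm)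
    have hd : n ∣ (i+n-1) - (i+2) := (Nat.modEq_iff_dvd' (by omega)).mp hmod
    have he : (i+n-1) - (i+2) = n - 3 := by omega
    rw [he] at hd
    rcases Nat.eq_zero_or_pos (n-3) with h0 | hpos
    · omega
    · exact absurd (Nat.le_of_dvd hpos hd) (by omega)

theorem not_hasDiwheel_ext {G G' : V → V → Prop} {s t : Set V} {p q : V}
    (hGs : ∀ a b, G a b → a ∈ s ∧ b ∈ s)
    (hts : ∀ w ∈ t, w ∉ s) (hps : p ∈ s) (hqs : q ∈ s)
    (hG' : ∀ a b, G' a b → G a b ∨ (a = p ∧ b ∈ t) ∨ (a ∈ t ∧ b = q))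
    (hdw : ¬ HasDiwheel G) : ¬ HasDiwheel G' := by
  classical
  rintro ⟨c, r, hlen, hnd, hspoke, hrim⟩
  have hm0 : 0 < r.length := by omega
  have hm1 : 1 < r.length := hlen
  have hpred : ∀ a b, G' a b → b ∈ t → a = p := by
    intro a b hab hbt
    rcases hG' a b hab with h | ⟨h1, _⟩ | ⟨_, h2⟩
    · exact absurd (hGs a b h).2 (hts b hbt)
    · exact h1
    · exact absurd (h2 ▸ hqs) (hts b hbt)
  have hsucc : ∀ a b, G' a b → a ∈ t → b = q := by
    intro a b hab hat
    rcases hG' a b hab with h | ⟨h1, _⟩ | ⟨_, h2⟩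
    · exact absurd (hGs a b h).1 (hts a hat)
    · exact absurd (h1 ▸ hps) (hts a hat)
    · exact h2
  have hr : ∀ (j : ℕ) (hj : j < r.length),
      G' (r.get ⟨(j+1) % r.length, Nat.mod_lt _ hm0⟩).1 (r.get ⟨j, hj⟩).2 :=
    fun j hj => zip_rotate_get (R := fun a b => G' b.1 a.2) hrim j hj
  have hnd' := (List.nodup_cons.mp hnd).2
  have hndf : (r.map Prod.fst).Nodup := (List.nodup_append.mp hnd').1
  have hnds : (r.map Prod.snd).Nodup := (List.nodup_append.mp hnd').2.1
  have hspoke' : ∀ (i : ℕ) (hi : i < r.length),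
      G' (r.get ⟨i, hi⟩).1 (r.get ⟨i, hi⟩).2 ∧ G' (r.get ⟨i, hi⟩).2 c ∧
        G' c (r.get ⟨i, hi⟩).1 :=
    fun i hi => hspoke _ (List.get_mem _ _)
  by_cases hct : c ∈ t
  · have e0 : (r.get ⟨0, hm0⟩).2 = p := hpred _ _ (hspoke' 0 hm0).2.1 hct
    have e1 : (r.get ⟨1, hm1⟩).2 = p := hpred _ _ (hspoke' 1 hm1).2.1 hct
    exact map_get_ne hnds hm0 hm1 (by omega) (e0.trans e1.symm)
  by_cases hft : ∃ (i : ℕ) (hi : i < r.length), (r.get ⟨i, hi⟩).1 ∈ t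
  · obtain ⟨i, hi, hw⟩ := hft
    have e1 : (r.get ⟨i, hi⟩).2 = q := hsucc _ _ (hspoke' i hi).1 hw
    have hjm : (i + r.length - 1) % r.length < r.length := Nat.mod_lt _ hm0
    have hji : ((i + r.length - 1) % r.length + 1) % r.length = i := by
      rw [Nat.mod_add_mod, show i + r.length - 1 + 1 = i + r.length from by omega,
        Nat.add_mod_right, Nat.mod_eq_of_lt hi]
    have hrj := hr ((i + r.length - 1) % r.length) hjm
    rw [show (⟨((i + r.length - 1) % r.length + 1) % r.length, Nat.mod_lt _ hm0⟩ : Fin r.length)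
      = ⟨i, hi⟩ from Fin.ext hji] at hrj
    have e2 : (r.get ⟨(i + r.length - 1) % r.length, hjm⟩).2 = q := hsucc _ _ hrj hw
    have hij : i ≠ (i + r.length - 1) % r.length := by
      intro e
      rw [← e] at hji
      rcases Nat.lt_or_ge (i+1) r.length with hlt | hge
      · rw [Nat.mod_eq_of_lt hlt] at hji; omega
      · have : i + 1 = r.length := by omega
        rw [← this] at hji
        simp at hji
        omega
    exact map_get_ne hnds hi hjm hij (e1.trans e2.symm)
  by_cases hst : ∃ (i : ℕ) (hi : i < r.length), (r.get ⟨i, hi⟩).2 ∈ t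
  · obtain ⟨i, hi, hw⟩ := hst
    have e1 : (r.get ⟨i, hi⟩).1 = p := hpred _ _ (hspoke' i hi).1 hw
    have hi1 : (i+1) % r.length < r.length := Nat.mod_lt _ hm0
    have e2 : (r.get ⟨(i+1) % r.length, hi1⟩).1 = p := hpred _ _ (hr i hi) hw
    have hne : i ≠ (i+1) % r.length := by
      intro e
      rcases Nat.lt_or_ge (i+1) r.length with hlt | hge
      · rw [Nat.mod_eq_of_lt hlt] at e; omega
      · have h' : i + 1 = r.length := by omega
        rw [h'] at e
        simp at e
        omega
    exact map_get_ne hndf hi hi1 hne (e1.trans e2.symm)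
  · push_neg at hft hst
    have hGr : ∀ a b, G' a b → a ∉ t → b ∉ t → G a b := by
      intro a b hab hat hbt
      rcases hG' a b hab with h | ⟨_, h2⟩ | ⟨h1, _⟩
      · exact h
      · exact absurd h2 hbt
      · exact absurd h1 hat
    have hmemr : ∀ x ∈ r, x.1 ∉ t ∧ x.2 ∉ t := by
      intro x hx
      obtain ⟨i, rfl⟩ := List.mem_iff_get.mp hx
      exact ⟨hft i.1 i.2, hst i.1 i.2⟩
    apply hdw
    refine ⟨c, r, hlen, hnd, ?_, ?_⟩
    · intro x hx
      obtain ⟨k1, k2, k3⟩ := hspoke x hx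
      obtain ⟨m1, m2⟩ := hmemr x hx
      exact ⟨hGr _ _ k1 m1 m2, hGr _ _ k2 m2 hct, hGr _ _ k3 hct m1⟩
    · intro qq hq
      have hmem := List.of_mem_zip (a := qq.1) (b := qq.2) hq
      exact hGr _ _ (hrim qq hq)
        (hmemr qq.2 (List.mem_rotate.mp hmem.2)).1 (hmemr qq.1 hmem.1).2

end Ext

section Master

open Relation

theorem master {s : Set V} {G : V → V → Prop} (h : SafelyBuildable s G) :
    (∀ a b, G a b → a ∈ s ∧ b ∈ s) ∧
    (∃ x y z : V, x ≠ y ∧ y ≠ z ∧ x ≠ z ∧ x ∈ s ∧ y ∈ s ∧ z ∈ s) ∧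
    (∀ a ∈ s, ∀ b ∈ s, Relation.ReflTransGen G a b) ∧
    (∀ z : V, ∀ a ∈ s, a ≠ z → ∀ b ∈ s, b ≠ z →
      Relation.ReflTransGen (fun p q => q ≠ z ∧ (underlying G).Adj p q) a b) ∧
    IsLCyclic G 3 ∧ ¬ HasDiwheel G := by
  induction h with
  | base x y z hxy hyz hxz =>
    classical
    refine ⟨?_, ⟨x, y, z, hxy, hyz, hxz, by simp, by simp, by simp⟩, ?_, ?_, ?_, ?_⟩
    · rintro a b (⟨rfl, rfl⟩ | ⟨rfl, rfl⟩ | ⟨rfl, rfl⟩) <;> simp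
    · have cyc : ∀ a ∈ ({x, y, z} : Set V),
          Relation.ReflTransGen (fun a b => (a = x ∧ b = y) ∨ (a = y ∧ b = z) ∨ (a = z ∧ b = x)) a x ∧
          Relation.ReflTransGen (fun a b => (a = x ∧ b = y) ∨ (a = y ∧ b = z) ∨ (a = z ∧ b = x)) x a := by
        intro a ha
        simp only [Set.mem_insert_iff, Set.mem_singleton_iff] at ha
        rcases ha with rfl | rfl | rfl
        · exact ⟨ReflTransGen.refl, ReflTransGen.refl⟩
        · exact ⟨ReflTransGen.head (Or.inr (Or.inl ⟨rfl, rfl⟩))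
              (ReflTransGen.single (Or.inr (Or.inr ⟨rfl, rfl⟩))),
            ReflTransGen.single (Or.inl ⟨rfl, rfl⟩)⟩
        · exact ⟨ReflTransGen.single (Or.inr (Or.inr ⟨rfl, rfl⟩)),
            ReflTransGen.head (Or.inl ⟨rfl, rfl⟩)
              (ReflTransGen.single (Or.inr (Or.inl ⟨rfl, rfl⟩)))⟩
      intro a ha b hb
      exact (cyc a ha).1.trans (cyc b hb).2
    · intro z' a ha haz b hb hbz
      by_cases hab : a = b
      · subst hab; exact ReflTransGen.refl
      · refine ReflTransGen.single ⟨hbz, hab, ?_⟩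
        simp only [Set.mem_insert_iff, Set.mem_singleton_iff] at ha hb
        rcases ha with rfl | rfl | rfl <;> rcases hb with rfl | rfl | rfl <;>
          first
          | exact absurd rfl hab
          | exact Or.inl (Or.inl ⟨rfl, rfl⟩)
          | exact Or.inl (Or.inr (Or.inl ⟨rfl, rfl⟩))
          | exact Or.inl (Or.inr (Or.inr ⟨rfl, rfl⟩))
          | exact Or.inr (Or.inl ⟨rfl, rfl⟩)
          | exact Or.inr (Or.inr (Or.inl ⟨rfl, rfl⟩))
          | exact Or.inr (Or.inr (Or.inr ⟨rfl, rfl⟩))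
    · intro l hl
      obtain ⟨n, f, hn, hn0, hf, hinj, hcng, hmemf, hsurj⟩ := dicycle_f hl
      have hsub : ∀ a ∈ l, a ∈ ({x, y, z} : Finset V) := by
        intro a ha
        obtain ⟨j, hj⟩ := hsurj a ha
        have hh := hf j
        rw [hj] at hh
        rcases hh with ⟨h1, _⟩ | ⟨h1, _⟩ | ⟨h1, _⟩ <;> simp [h1]
      have hle : n ≤ 3 := by
        have h1 : l.toFinset.card = l.length := List.toFinset_card_of_nodup hl.2.1
        have h2 : l.toFinset ⊆ {x, y, z} := fun a ha => hsub a (List.mem_toFinset.mp ha)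
        have h3 : ({x, y, z} : Finset V).card ≤ 3 := by
          apply le_trans (Finset.card_insert_le _ _)
          apply Nat.succ_le_succ
          apply le_trans (Finset.card_insert_le _ _)
          simp
        rw [hn]
        calc l.length = l.toFinset.card := h1.symm
          _ ≤ ({x, y, z} : Finset V).card := Finset.card_le_card h2
          _ ≤ 3 := h3
      rw [← hn]
      by_cases h1 : n = 1
      · exfalso
        have e : f 1 = f 0 := hcng _ _ (by simp [h1])
        have hh := hf 0
        rw [e] at hh
        rcases hh with ⟨ha, hb⟩ | ⟨ha, hb⟩ | ⟨ha, hb⟩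
        · exact hxy (ha.symm.trans hb)
        · exact hyz (ha.symm.trans hb)
        · exact hxz (hb.symm.trans ha)
      by_cases h2 : n = 2
      · exfalso
        have e : f 2 = f 0 := hcng _ _ (by rw [h2])
        have c01 := hf 0
        have c12 := hf 1
        rw [e] at c12
        rcases c01 with ⟨ha, hb⟩ | ⟨ha, hb⟩ | ⟨ha, hb⟩ <;>
          rcases c12 with ⟨hc, hd⟩ | ⟨hc, hd⟩ | ⟨hc, hd⟩ <;>
          first
          | exact hxy (hc.symm.trans hb)
          | exact hxz (ha.symm.trans hd)
          | exact hyz (hb.symm.trans hc)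
          | exact hxz (hc.symm.trans hb)
          | exact hyz (hc.symm.trans hb)
          | exact hxy (hd.symm.trans ha)
          | exact hyz (hd.symm.trans ha)
          | exact hxy (hb.symm.trans hc)
          | exact hxz (hb.symm.trans hc)
      omega
    · rintro ⟨c, r, hlen, hnd, hspoke, hrim⟩
      have hm0 : 0 < r.length := by omega
      have hm1 : 1 < r.length := hlen
      have hnds : (r.map Prod.snd).Nodup :=
        (List.nodup_append.mp (List.nodup_cons.mp hnd).2).2.1
      have hne01 := map_get_ne hnds hm0 hm1 (by omega)
      have s0 := (hspoke _ (List.get_mem r ⟨0, hm0⟩)).2.1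
      have s1 := (hspoke _ (List.get_mem r ⟨1, hm1⟩)).2.1
      rcases s0 with ⟨ha, hb⟩ | ⟨ha, hb⟩ | ⟨ha, hb⟩ <;>
        rcases s1 with ⟨hc, hd⟩ | ⟨hc, hd⟩ | ⟨hc, hd⟩ <;>
        first
        | exact hne01 (ha.trans hc.symm)
        | exact hyz (hb.symm.trans hd)
        | exact hyz (hd.symm.trans hb)
        | exact hxy (hd.symm.trans hb)
        | exact hxy (hb.symm.trans hd)
        | exact hxz (hd.symm.trans hb)
        | exact hxz (hb.symm.trans hd)
  | stepOut s t G u v hsb hu hv hout hin huv htne hts ih =>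
    obtain ⟨ihGs, ⟨x, y, z, hxy, hyz, hxz, hxs, hys, hzs⟩, ihSC, ihTC, ihcyc, ihdw⟩ := ih
    have hvu : v ≠ u := (lcyclic_ne ihcyc huv).symm
    refine ⟨?_, ⟨x, y, z, hxy, hyz, hxz, Or.inl hxs, Or.inl hys, Or.inl hzs⟩, ?_, ?_, ?_, ?_⟩
    · rintro a b (hab | ⟨rfl, hbt⟩ | ⟨hat, rfl⟩)
      · exact ⟨Or.inl (ihGs a b hab).1, Or.inl (ihGs a b hab).2⟩
      · exact ⟨Or.inl hv, Or.inr hbt⟩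
      · exact ⟨Or.inr hat, Or.inl hu⟩
    · exact rtg_sc_ext hv hu (fun a b hab => Or.inl hab)
        (fun w hw => Or.inr (Or.inl ⟨rfl, hw⟩))
        (fun w hw => Or.inr (Or.inr ⟨hw, rfl⟩)) ihSC
    · exact rtg_tc_ext hu hv hvu.symm
        (fun a b hab => ⟨hab.1.symm, hab.2.symm⟩)
        (fun a b hab => ⟨hab.1, hab.2.imp Or.inl Or.inl⟩)
        (fun w hw => ⟨fun e => hts w hw (e ▸ hu), Or.inl (Or.inr (Or.inr ⟨hw, rfl⟩))⟩)
        (fun w hw => ⟨fun e => hts w hw (e ▸ hv), Or.inr (Or.inr (Or.inl ⟨rfl, hw⟩))⟩)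
        ihTC
    · exact isLCyclic_ext_out ihGs hts hu hv hvu (fun a b => Iff.rfl)
        (fun a ha => hin.unique ha huv) ihcyc
    · exact not_hasDiwheel_ext ihGs hts hv hu (fun a b hab => hab) ihdw
  | stepIn s t G u v hsb hu hv hout hin hvu' htne hts ih =>
    obtain ⟨ihGs, ⟨x, y, z, hxy, hyz, hxz, hxs, hys, hzs⟩, ihSC, ihTC, ihcyc, ihdw⟩ := ih
    have hvu : v ≠ u := lcyclic_ne ihcyc hvu'
    refine ⟨?_, ⟨x, y, z, hxy, hyz, hxz, Or.inl hxs, Or.inl hys, Or.inl hzs⟩, ?_, ?_, ?_, ?_⟩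
    · rintro a b (hab | ⟨rfl, hbt⟩ | ⟨hat, rfl⟩)
      · exact ⟨Or.inl (ihGs a b hab).1, Or.inl (ihGs a b hab).2⟩
      · exact ⟨Or.inl hu, Or.inr hbt⟩
      · exact ⟨Or.inr hat, Or.inl hv⟩
    · exact rtg_sc_ext hu hv (fun a b hab => Or.inl hab)
        (fun w hw => Or.inr (Or.inl ⟨rfl, hw⟩))
        (fun w hw => Or.inr (Or.inr ⟨hw, rfl⟩)) ihSC
    · exact rtg_tc_ext hu hv hvu.symm
        (fun a b hab => ⟨hab.1.symm, hab.2.symm⟩)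
        (fun a b hab => ⟨hab.1, hab.2.imp Or.inl Or.inl⟩)
        (fun w hw => ⟨fun e => hts w hw (e ▸ hu), Or.inr (Or.inr (Or.inl ⟨rfl, hw⟩))⟩)
        (fun w hw => ⟨fun e => hts w hw (e ▸ hv), Or.inl (Or.inr (Or.inr ⟨hw, rfl⟩))⟩)
        ihTC
    · exact isLCyclic_ext_in ihGs hts hu hv hvu (fun a b => Iff.rfl)
        (fun b hb => hout.unique hb hvu') ihcyc
    · exact not_hasDiwheel_ext ihGs hts hu hv (fun a b hab => hab) ihdw

end Master

end Cyclic3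

open Cyclic3 in
/-- Every safely buildable digraph is unbreakable, 3-cyclic and diwheel-free. -/
theorem stmt_11 {V : Type*} [Fintype V] (G : V → V → Prop)
    (h : SafelyBuildable (Set.univ : Set V) G) :
    Unbreakable G ∧ IsLCyclic G 3 ∧ ¬ HasDiwheel G := by
  classical
  obtain ⟨hGs, ⟨x, y, z, hxy, hyz, hxz, -, -, -⟩, hSC, hTC, hcyc, hdw⟩ := master h
  refine ⟨⟨⟨⟨x⟩, fun a b => rtg_diwalk (hSC a (Set.mem_univ a) b (Set.mem_univ b))⟩,
    ?_, ?_⟩, hcyc, hdw⟩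
  · rw [Nat.card_eq_fintype_card]
    have h3 : ({x, y, z} : Finset V).card = 3 := by
      rw [Finset.card_insert_of_notMem (by simp [hxy, hxz]),
        Finset.card_insert_of_notMem (by simp [hyz]), Finset.card_singleton]
    calc 3 = ({x, y, z} : Finset V).card := h3.symm
      _ ≤ Fintype.card V := Finset.card_le_univ _
  · intro z'
    rw [SimpleGraph.connected_iff]
    constructor
    · intro a b
      have hr := hTC z' a.1 (Set.mem_univ _) a.2 b.1 (Set.mem_univ _) b.2
      exact rtg_reachable hr a.2 b.2
    · by_cases hx : x = z'
      · exact ⟨⟨y, show y ≠ z' from hx ▸ hxy.symm⟩⟩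
      · exact ⟨⟨x, hx⟩⟩
end

section
/- If G and G' are ℓ-cyclic digraphs on disjoint vertex sets, uv is a special edge of G, and u'v' is a special edge of G', then the digraph obtained by identifying u with u' and v with v' (the special edge sum) is ℓ-cyclic. -/
section Aux

open Cyclic3

variable {W : Type*}

private lemma zip_wrap (G : W → W → Prop) :
    ∀ (xs : List W) (x z : W),
      (∀ p ∈ (x :: xs).zip (xs ++ [z]), G p.1 p.2) ↔
        (List.Chain' G (x :: xs) ∧ G ((x :: xs).getLast (by simp)) z)
  | [], x, z => by simp [List.Chain', List.isChain_singleton]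
  | y :: ys, x, z => by
      have ih := zip_wrap G ys y z
      constructor
      · intro h
        have h1 : G x y := h (x, y) (by simp)
        have h2 := ih.mp (fun p hp => h p (by simp [hp]))
        refine ⟨List.isChain_cons_cons.mpr ⟨h1, h2.1⟩, ?_⟩
        simpa [List.getLast_cons] using h2.2
      · rintro ⟨hc, hw⟩ p hp
        rw [show ((x :: y :: ys).zip ((y :: ys) ++ [z])) =
          (x, y) :: ((y :: ys).zip (ys ++ [z])) from rfl] at hp
        rcases List.mem_cons.mp hp with rfl | hp
        · exact (List.isChain_cons_cons.mp hc).1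
        · exact ih.mpr ⟨(List.isChain_cons_cons.mp hc).2,
            by simpa [List.getLast_cons] using hw⟩ p hp

private lemma isDicycle_cons_iff (G : W → W → Prop) (x : W) (xs : List W) :
    IsDicycle G (x :: xs) ↔
      (x :: xs).Nodup ∧ List.Chain' G (x :: xs) ∧
        G ((x :: xs).getLast (by simp)) x := by
  have hrot : (x :: xs).rotate 1 = xs ++ [x] := by
    rw [show (1 : ℕ) = 0 + 1 from rfl, List.rotate_cons_succ, List.rotate_zero]
  unfold IsDicycle
  rw [hrot, zip_wrap]
  simp [and_assoc]

private lemma dicycle_chain' {G : W → W → Prop} {l : List W}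
    (h : IsDicycle G l) : List.Chain' G l := by
  cases l with
  | nil => exact List.isChain_nil
  | cons x xs => exact ((isDicycle_cons_iff G x xs).mp h).2.1

private lemma dicycle_rotate_one (G : W → W → Prop) (l : List W)
    (h : IsDicycle G l) : IsDicycle G (l.rotate 1) := by
  match l with
  | [] => simpa using h
  | [x] => simpa using h
  | x :: y :: ys =>
    rw [isDicycle_cons_iff] at h
    obtain ⟨hnd, hch, hw⟩ := h
    have hrot : (x :: y :: ys).rotate 1 = (y :: ys) ++ [x] := by
      rw [show (1 : ℕ) = 0 + 1 from rfl, List.rotate_cons_succ, List.rotate_zero]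
    rw [hrot]
    rw [show ((y :: ys) ++ [x]) = y :: (ys ++ [x]) from rfl, isDicycle_cons_iff]
    obtain ⟨hxy, hch'⟩ := List.isChain_cons_cons.mp hch
    refine ⟨?_, ?_, ?_⟩
    · have := (List.nodup_rotate (l := x :: y :: ys) (n := 1)).mpr hnd
      rwa [hrot] at this
    · refine List.IsChain.append hch' (List.isChain_singleton x) ?_
      intro a ha b hb
      simp only [List.head?_cons, Option.mem_def, Option.some_inj] at hb
      subst hb
      have : a = (y :: ys).getLast (by simp) := by
        rwa [List.getLast?_eq_getLast (by simp), Option.mem_def, Option.some_inj, eq_comm] at ha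
      subst this
      simpa [List.getLast_cons] using hw
    · have hgl : (y :: (ys ++ [x])).getLast (by simp) = x := by simp
      simpa [hgl] using hxy

private lemma dicycle_rotate (G : W → W → Prop) (l : List W) (n : ℕ)
    (h : IsDicycle G l) : IsDicycle G (l.rotate n) := by
  induction n with
  | zero => simpa using h
  | succ n ih =>
      have := dicycle_rotate_one G (l.rotate n) ih
      rwa [List.rotate_rotate] at this

private lemma dicycle_shift (G : W → W → Prop) (s t : List W)
    (h : IsDicycle G (s ++ t)) : IsDicycle G (t ++ s) := by
  have hlen : s.length ≤ (s ++ t).length := by simp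
  have heq : t ++ s = (s ++ t).rotate s.length := by
    rw [List.rotate_eq_drop_append_take hlen, List.drop_left, List.take_left]
  rw [heq]
  exact dicycle_rotate G _ _ h

private lemma chain'_restrict {G : W → W → Prop} {T : Set W} :
    ∀ m : List W, List.Chain' G m → (∀ x ∈ m, x ∈ T) →
      List.Chain' (fun a b => G a b ∧ a ∈ T ∧ b ∈ T) m
  | [], _, _ => List.isChain_nil
  | [x], _, _ => List.isChain_singleton x
  | x :: y :: ys, hc, hm => by
      unfold List.Chain' at hc ⊢
      rw [List.isChain_cons_cons] at hc ⊢
      exact ⟨⟨hc.1, hm x (by simp), hm y (by simp)⟩,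
        chain'_restrict (y :: ys) hc.2 (fun z hz => hm z (List.mem_cons_of_mem _ hz))⟩

private lemma homog {G : W → W → Prop} {u v : W} {S S' : Set W}
    (hcov : S ∪ S' = Set.univ) (hint : S ∩ S' = {u, v})
    (hedges : ∀ x y, G x y → (x ∈ S ∧ y ∈ S) ∨ (x ∈ S' ∧ y ∈ S')) :
    ∀ m : List W, List.Chain' G m → (∀ x ∈ m, x ≠ u ∧ x ≠ v) →
      (∀ x ∈ m, x ∈ S ∧ x ∉ S') ∨ (∀ x ∈ m, x ∈ S' ∧ x ∉ S)
  | [], _, _ => Or.inl (by simp)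
  | [x], _, hm => by
      have hx : x ∈ S ∪ S' := hcov ▸ Set.mem_univ x
      have hxi : x ∉ S ∩ S' := by
        rw [hint]
        have := hm x (by simp)
        simp [this.1, this.2]
      by_cases hxS : x ∈ S
      · refine Or.inl ?_
        intro z hz
        rw [List.mem_singleton] at hz
        subst hz
        exact ⟨hxS, fun h' => hxi ⟨hxS, h'⟩⟩
      · refine Or.inr ?_
        intro z hz
        rw [List.mem_singleton] at hz
        subst hz
        rcases hx with h | h
        · exact absurd h hxS
        · exact ⟨h, hxS⟩
  | x :: y :: ys, hc, hm => by
      obtain ⟨hxy, hc'⟩ := List.isChain_cons_cons.mp hc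
      have hxi : x ∉ S ∩ S' := by
        rw [hint]
        have := hm x (by simp)
        simp [this.1, this.2]
      rcases homog hcov hint hedges (y :: ys) hc'
          (fun z hz => hm z (List.mem_cons_of_mem _ hz)) with hside | hside
      · refine Or.inl ?_
        intro z hz
        rcases List.mem_cons.mp hz with rfl | hz
        · rcases hedges z y hxy with he | he
          · exact ⟨he.1, fun h' => hxi ⟨he.1, h'⟩⟩
          · exact absurd he.2 (hside y (by simp)).2
        · exact hside z hz
      · refine Or.inr ?_
        intro z hz
        rcases List.mem_cons.mp hz with rfl | hz
        · rcases hedges z y hxy with he | he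
          · exact absurd he.2 (hside y (by simp)).2
          · exact ⟨he.1, fun h' => hxi ⟨h', he.1⟩⟩
        · exact hside z hz

private lemma special_path {H : W → W → Prop} {u v : W}
    (hsp : SpecialEdge H u v) (P : List W)
    (hch : List.Chain' H (u :: P ++ [v])) (hnd : (u :: P ++ [v]).Nodup) :
    P = [] := by
  cases P with
  | nil => rfl
  | cons p P' =>
    exfalso
    obtain ⟨huv, hdeg⟩ := hsp
    rcases hdeg with hout | hin
    · obtain ⟨a, ha⟩ := Set.ncard_eq_one.mp hout
      have h1 : H u p := (List.isChain_cons_cons.mp hch).1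
      have hpa : p = a := by
        have : p ∈ ({a} : Set W) := ha ▸ h1
        simpa using this
      have hva : v = a := by
        have : v ∈ ({a} : Set W) := ha ▸ huv
        simpa using this
      have : p ≠ v := by
        have h2 : (p :: (P' ++ [v])).Nodup := (List.nodup_cons.mp hnd).2
        have h3 := (List.nodup_cons.mp h2).1
        intro h; exact h3 (by simp [h])
      exact this (hpa.trans hva.symm)
    · obtain ⟨a, ha⟩ := Set.ncard_eq_one.mp hin
      have hlast : H ((u :: p :: P').getLast (by simp)) v := by
        have : List.Chain' H ((u :: p :: P') ++ [v]) := hch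
        rw [List.Chain', List.isChain_append] at this
        have h3 := this.2.2
        refine h3 _ ?_ v (by simp)
        rw [List.getLast?_eq_getLast (by simp)]
        rfl
      have h1 : (u :: p :: P').getLast (by simp) = a := by
        have : (u :: p :: P').getLast (by simp) ∈ ({a} : Set W) := ha ▸ hlast
        simpa using this
      have h2 : u = a := by
        have : u ∈ ({a} : Set W) := ha ▸ huv
        simpa using this
      have hmem : (u :: p :: P').getLast (by simp) ∈ p :: P' := by
        rw [List.getLast_cons (by simp)]
        exact List.getLast_mem _
      rw [h1, ← h2] at hmem
      have hun : u ∉ p :: P' ++ [v] := (List.nodup_cons.mp hnd).1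
      exact hun (show u ∈ (p :: P') ++ [v] from List.mem_append_left _ hmem)

end Aux

open Cyclic3 in
/-- The special edge sum of two `ℓ`-cyclic digraphs is `ℓ`-cyclic. The two summands
are the restrictions of `G` to `S` and `S'`, which overlap exactly in the two ends
`u,v` of the identified special edge. -/
theorem stmt_13 {W : Type*} [Fintype W] (G : W → W → Prop) (ℓ : ℕ)
    (hirr : Irreflexive G) (u v : W) (huv : u ≠ v) (S S' : Set W)
    (hcov : S ∪ S' = Set.univ) (hint : S ∩ S' = {u, v})
    (hedges : ∀ x y, G x y → (x ∈ S ∧ y ∈ S) ∨ (x ∈ S' ∧ y ∈ S'))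
    (hG1 : IsLCyclic (fun x y => G x y ∧ x ∈ S ∧ y ∈ S) ℓ)
    (hG2 : IsLCyclic (fun x y => G x y ∧ x ∈ S' ∧ y ∈ S') ℓ)
    (hsp1 : SpecialEdge (fun x y => G x y ∧ x ∈ S ∧ y ∈ S) u v)
    (hsp2 : SpecialEdge (fun x y => G x y ∧ x ∈ S' ∧ y ∈ S') u v) :
    IsLCyclic G ℓ := by
  intro l hl
  by_cases hA : ∀ x ∈ l, x ∈ S
  · refine hG1 l ⟨hl.1, hl.2.1, fun p hp => ⟨hl.2.2 p hp, ?_, ?_⟩⟩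
    · exact hA p.1 (List.of_mem_zip hp).1
    · exact hA p.2 (List.mem_rotate.mp (List.of_mem_zip hp).2)
  by_cases hB : ∀ x ∈ l, x ∈ S'
  · refine hG2 l ⟨hl.1, hl.2.1, fun p hp => ⟨hl.2.2 p hp, ?_, ?_⟩⟩
    · exact hB p.1 (List.of_mem_zip hp).1
    · exact hB p.2 (List.mem_rotate.mp (List.of_mem_zip hp).2)
  exfalso
  push_neg at hA hB
  obtain ⟨a, hal, haS⟩ := hA
  obtain ⟨b, hbl, hbS'⟩ := hB
  have huSS : u ∈ S ∧ u ∈ S' := by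
    have : u ∈ S ∩ S' := by rw [hint]; simp
    exact this
  have hvSS : v ∈ S ∧ v ∈ S' := by
    have : v ∈ S ∩ S' := by rw [hint]; simp
    exact this
  have hau : a ≠ u := fun h => haS (h ▸ huSS.1)
  have hav : a ≠ v := fun h => haS (h ▸ hvSS.1)
  have hbu : b ≠ u := fun h => hbS' (h ▸ huSS.2)
  have hbv : b ≠ v := fun h => hbS' (h ▸ hvSS.2)
  -- the key contradiction machine
  have contraQ : ∀ Q : List W, List.Chain' G Q → a ∈ Q → b ∈ Q →
      (∀ x ∈ Q, x ≠ u ∧ x ≠ v) → False := by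
    intro Q hQc haQ hbQ havoid
    rcases homog hcov hint hedges Q hQc havoid with hside | hside
    · exact haS (hside a haQ).1
    · exact hbS' (hside b hbQ).1
  -- u is a vertex of the cycle
  have hu_mem : u ∈ l := by
    by_contra hu
    by_cases hv : v ∈ l
    · obtain ⟨s, t, rfl⟩ := List.append_of_mem hv
      have hd : IsDicycle G (v :: (t ++ s)) := by
        have := dicycle_shift G s (v :: t) hl
        simpa using this
      have hch := dicycle_chain' hd
      have hnd : (v :: (t ++ s)).Nodup := hd.2.1
      have hvnot : v ∉ t ++ s := (List.nodup_cons.mp hnd).1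
      refine contraQ (t ++ s) (hch.tail) ?_ ?_ ?_
      · have : a ∈ v :: (t ++ s) := by
          rcases List.mem_append.mp hal with h | h
          · exact List.mem_cons_of_mem _ (List.mem_append.mpr (Or.inr h))
          · rcases List.mem_cons.mp h with rfl | h
            · simp
            · exact List.mem_cons_of_mem _ (List.mem_append.mpr (Or.inl h))
        rcases List.mem_cons.mp this with h | h
        · exact absurd h hav
        · exact h
      · have : b ∈ v :: (t ++ s) := by
          rcases List.mem_append.mp hbl with h | h
          · exact List.mem_cons_of_mem _ (List.mem_append.mpr (Or.inr h))
          · rcases List.mem_cons.mp h with rfl | h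
            · simp
            · exact List.mem_cons_of_mem _ (List.mem_append.mpr (Or.inl h))
        rcases List.mem_cons.mp this with h | h
        · exact absurd h hbv
        · exact h
      · intro x hx
        constructor
        · intro h; subst h
          exact hu (by
            rcases List.mem_append.mp hx with h | h
            · exact List.mem_append.mpr (Or.inr (List.mem_cons_of_mem _ h))
            · exact List.mem_append.mpr (Or.inl h))
        · intro h; subst h; exact hvnot hx
    · exact contraQ l (dicycle_chain' hl) hal hbl
        (fun x hx => ⟨fun h => hu (h ▸ hx), fun h => hv (h ▸ hx)⟩)
  -- rotate the cycle to start at u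
  obtain ⟨s, t, rfl⟩ := List.append_of_mem hu_mem
  have hd : IsDicycle G (u :: (t ++ s)) := by
    have := dicycle_shift G s (u :: t) hl
    simpa using this
  have hmem_iff : ∀ x : W, x ∈ u :: (t ++ s) ↔ x ∈ s ++ u :: t := by
    intro x; constructor
    · intro hx
      rcases List.mem_cons.mp hx with rfl | hx
      · exact List.mem_append.mpr (Or.inr (by simp))
      · rcases List.mem_append.mp hx with h | h
        · exact List.mem_append.mpr (Or.inr (List.mem_cons_of_mem _ h))
        · exact List.mem_append.mpr (Or.inl h)
    · intro hx
      rcases List.mem_append.mp hx with h | h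
      · exact List.mem_cons_of_mem _ (List.mem_append.mpr (Or.inr h))
      · rcases List.mem_cons.mp h with rfl | h
        · simp
        · exact List.mem_cons_of_mem _ (List.mem_append.mpr (Or.inl h))
  have hal' : a ∈ t ++ s := by
    rcases List.mem_cons.mp ((hmem_iff a).mpr hal) with h | h
    · exact absurd h hau
    · exact h
  have hbl' : b ∈ t ++ s := by
    rcases List.mem_cons.mp ((hmem_iff b).mpr hbl) with h | h
    · exact absurd h hbu
    · exact h
  have hnd0 : (u :: (t ++ s)).Nodup := hd.2.1
  have hch0 : List.Chain' G (u :: (t ++ s)) := dicycle_chain' hd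
  -- v is in the rest
  have hv_mem : v ∈ t ++ s := by
    by_contra hv
    exact contraQ (t ++ s) hch0.tail hal' hbl'
      (fun x hx => ⟨fun h => (List.nodup_cons.mp hnd0).1 (h ▸ hx),
        fun h => hv (h ▸ hx)⟩)
  obtain ⟨P₁, P₂, hPeq⟩ := List.append_of_mem hv_mem
  rw [hPeq] at hd hnd0 hch0 hal' hbl'
  -- the first arc must be the single special edge: P₁ = []
  have hP1nil : P₁ = [] := by
    have hpre : (u :: P₁ ++ [v]) <+: (u :: (P₁ ++ v :: P₂)) :=
      ⟨P₂, by simp⟩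
    have hchL : List.Chain' G (u :: P₁ ++ [v]) := hch0.prefix hpre
    have hndL : (u :: P₁ ++ [v]).Nodup := by
      have : ((u :: P₁ ++ [v]) ++ P₂).Nodup := by
        simpa using hnd0
      exact this.of_append_left
    have hP1avoid : ∀ x ∈ P₁, x ≠ u ∧ x ≠ v := by
      intro x hx
      have h1 : u ∉ P₁ ++ v :: P₂ := (List.nodup_cons.mp hnd0).1
      have h2 : (P₁ ++ v :: P₂).Nodup := (List.nodup_cons.mp hnd0).2
      have h3 : v ∉ P₁ := by
        intro h
        have := List.disjoint_of_nodup_append h2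
        exact this h (by simp)
      exact ⟨fun h => h1 (h ▸ List.mem_append.mpr (Or.inl hx)),
        fun h => h3 (h ▸ hx)⟩
    have hP1chain : List.Chain' G P₁ := by
      have : List.Chain' G (P₁ ++ [v]) := hchL.tail
      exact this.prefix ⟨[v], rfl⟩
    rcases homog hcov hint hedges P₁ hP1chain hP1avoid with hside | hside
    · refine special_path hsp1 P₁ ?_ hndL
      refine chain'_restrict _ hchL ?_
      intro x hx
      rcases List.mem_cons.mp hx with rfl | hx
      · exact huSS.1
      · rcases List.mem_append.mp hx with h | h
        · exact (hside x h).1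
        · rw [List.mem_singleton] at h; exact h ▸ hvSS.1
    · refine special_path hsp2 P₁ ?_ hndL
      refine chain'_restrict _ hchL ?_
      intro x hx
      rcases List.mem_cons.mp hx with rfl | hx
      · exact huSS.2
      · rcases List.mem_append.mp hx with h | h
        · exact (hside x h).1
        · rw [List.mem_singleton] at h; exact h ▸ hvSS.2
  subst hP1nil
  simp only [List.nil_append] at hd hnd0 hch0 hal' hbl'
  -- now the cycle is u :: v :: P₂, and a, b ∈ P₂; homogeneity kills it
  have haP2 : a ∈ P₂ := by
    rcases List.mem_cons.mp hal' with h | h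
    · exact absurd h hav
    · exact h
  have hbP2 : b ∈ P₂ := by
    rcases List.mem_cons.mp hbl' with h | h
    · exact absurd h hbv
    · exact h
  refine contraQ P₂ (hch0.tail.tail) haP2 hbP2 ?_
  intro x hx
  have h1 : u ∉ v :: P₂ := (List.nodup_cons.mp hnd0).1
  have h2 : v ∉ P₂ := (List.nodup_cons.mp (List.nodup_cons.mp hnd0).2).1
  exact ⟨fun h => h1 (h ▸ List.mem_cons_of_mem _ hx), fun h => h2 (h ▸ hx)⟩
end

section
/- Let G be an unbreakable 3-cyclic digraph, and let {u,v} be a cutset of G⁻. Then u and v are adjacent in G. -/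
namespace C3A
variable {V : Type*}

/-- directed reachability with internal vertices in `A`, length ≥ 1 -/
inductive Reach (G : V → V → Prop) (A : Set V) : V → V → Prop
  | single {x y : V} : G x y → Reach G A x y
  | cons {x c y : V} : G x c → c ∈ A → Reach G A c y → Reach G A x y

theorem Reach.snoc {G : V → V → Prop} {A : Set V} {x y z : V}
    (r : Reach G A x y) (hy : y ∈ A) (h : G y z) : Reach G A x z := by
  induction r with
  | single h' => exact .cons h' hy (.single h)
  | cons h1 h2 _ ih => exact .cons h1 h2 (ih hy h)

theorem Reach.comp {G : V → V → Prop} {A : Set V} {x y z : V}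
    (r : Reach G A x y) (hy : y ∈ A) (r2 : Reach G A y z) : Reach G A x z := by
  induction r with
  | single h' => exact .cons h' hy r2
  | cons h1 h2 _ ih => exact .cons h1 h2 (ih hy r2)

theorem Reach.chain {G : V → V → Prop} {A : Set V} {x y : V} (r : Reach G A x y) :
    ∃ m : List V, (∀ a ∈ m, a ∈ A) ∧ (x :: m ++ [y]).Chain' G := by
  induction r with
  | single h' => exact ⟨[], by simp, by simp [List.Chain', List.isChain_pair, h']⟩
  | @cons a c b h1 h2 _ ih =>
    obtain ⟨m, hm, hc⟩ := ih
    refine ⟨c :: m, ?_, ?_⟩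
    · intro z hz
      rcases List.mem_cons.mp hz with rfl | h
      · exact h2
      · exact hm _ h
    · exact List.isChain_cons_cons.mpr ⟨h1, hc⟩

theorem not_nodup_split {l : List V} (h : ¬ l.Nodup) :
    ∃ (x : V) (l1 l2 l3 : List V), l = (l1 ++ x :: l2) ++ x :: l3 := by
  induction l with
  | nil => simp at h
  | cons a t ih =>
    by_cases ha : a ∈ t
    · obtain ⟨l2, l3, rfl⟩ := List.append_of_mem ha
      exact ⟨a, [], l2, l3, rfl⟩
    · have : ¬ t.Nodup := fun hn => h (List.nodup_cons.mpr ⟨ha, hn⟩)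
      obtain ⟨x, l1, l2, l3, rfl⟩ := ih this
      exact ⟨x, a :: l1, l2, l3, rfl⟩

theorem getLast?_cons_some (x : V) (l : List V) : ∃ y, (x :: l).getLast? = some y := by
  induction l generalizing x with
  | nil => exact ⟨x, rfl⟩
  | cons a t ih => rw [List.getLast?_cons_cons]; exact ih a

theorem dedup_chain (G : V → V → Prop) :
    ∀ n (l : List V), l.length ≤ n → l.Chain' G →
    ∃ l' : List V, l'.Nodup ∧ l'.Chain' G ∧ l'.head? = l.head? ∧
      l'.getLast? = l.getLast? ∧ l' ⊆ l := by
  intro n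
  induction n with
  | zero =>
    intro l hl _
    rw [Nat.le_zero, List.length_eq_zero_iff] at hl
    subst hl
    exact ⟨[], by simp [List.Chain']⟩
  | succ n ih =>
    intro l hl hc
    by_cases hnd : l.Nodup
    · exact ⟨l, hnd, hc, rfl, rfl, fun _ h => h⟩
    obtain ⟨x, l1, l2, l3, rfl⟩ := not_nodup_split hnd
    rw [List.Chain', List.isChain_append] at hc
    obtain ⟨hc12, hc3, hj⟩ := hc
    rw [List.isChain_append] at hc12
    have hc1 : (l1 ++ x :: l3).Chain' G := by
      rw [List.Chain', List.isChain_append]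
      refine ⟨hc12.1, hc3, ?_⟩
      intro a ha b hb
      simp only [List.head?_cons, Option.mem_def, Option.some.injEq] at hb ⊢
      subst hb
      exact hc12.2.2 a ha x rfl
    have hlen : (l1 ++ x :: l3).length ≤ n := by
      simp only [List.length_append, List.length_cons] at hl ⊢; omega
    obtain ⟨l', h1, h2, h3, h4, h5⟩ := ih _ hlen hc1
    obtain ⟨y, hy⟩ := getLast?_cons_some x l3
    refine ⟨l', h1, h2, ?_, ?_, ?_⟩
    · rw [h3]; cases l1 <;> simp
    · rw [h4, List.getLast?_append, List.getLast?_append, hy]; simp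
    · intro a ha
      have := h5 ha
      simp only [List.mem_append, List.mem_cons] at this ⊢
      tauto

theorem chain_rtg (G : V → V → Prop) :
    ∀ (l : List V) (a b : V), l.head? = some a → l.getLast? = some b → l.Chain' G →
      Relation.ReflTransGen G a b := by
  intro l
  induction l with
  | nil => intro a b h; simp at h
  | cons x t ih =>
    intro a b ha hb hc
    simp only [List.head?_cons, Option.some.injEq] at ha
    subst ha
    cases t with
    | nil =>
      simp only [List.getLast?_singleton, Option.some.injEq] at hb
      subst hb; rfl
    | cons y t' =>
      rw [List.getLast?_cons_cons] at hb
      rw [List.Chain', List.isChain_cons_cons] at hc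
      exact Relation.ReflTransGen.head hc.1 (ih y b rfl hb hc.2)

theorem rtg_to_tg {G : V → V → Prop} {a b : V} (h : Relation.ReflTransGen G a b)
    (hab : a ≠ b) : Relation.TransGen G a b := by
  rcases (Relation.reflTransGen_iff_eq_or_transGen).mp h with rfl | h'
  · exact absurd rfl hab
  · exact h'

theorem rotate_cons (a : V) (t : List V) : (a :: t).rotate 1 = t ++ [a] := by
  cases t with
  | nil => simp
  | cons b t' => rw [List.rotate_cons_succ, List.rotate_zero]

theorem zip_chain_aux {G : V → V → Prop} :
    ∀ (t : List V) (x a : V), ((x :: t) ++ [a]).Chain' G →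
      ∀ p ∈ (x :: t).zip (t ++ [a]), G p.1 p.2 := by
  intro t
  induction t with
  | nil =>
    intro x a hc p hp
    simp only [List.nil_append, List.zip_cons_cons, List.zip_nil_right, List.mem_singleton] at hp
    subst hp
    simpa [List.Chain', List.isChain_pair] using hc
  | cons b t' ih =>
    intro x a hc p hp
    simp only [List.cons_append, List.Chain', List.isChain_cons_cons] at hc
    simp only [List.cons_append, List.zip_cons_cons, List.mem_cons] at hp
    rcases hp with rfl | hp
    · exact hc.1
    · exact ih b a (by simpa [List.Chain'] using hc.2) p (by simpa using hp)

theorem zip_rotate_chain {G : V → V → Prop} (t : List V) (a : V)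
    (hc : ((a :: t) ++ [a]).Chain' G) :
    ∀ p ∈ (a :: t).zip ((a :: t).rotate 1), G p.1 p.2 := by
  rw [rotate_cons]
  exact zip_chain_aux t a a hc



theorem path_of_reach {G : V → V → Prop} {A : Set V} {a b : V}
    (hab : a ≠ b) (ha : a ∉ A) (hb : b ∉ A) (r : Reach G A a b) :
    ∃ m : List V, (∀ x ∈ m, x ∈ A) ∧ (a :: (m ++ [b])).Nodup ∧ (a :: (m ++ [b])).Chain' G := by
  obtain ⟨m0, hm0, hc0⟩ := r.chain
  obtain ⟨l', hnd, hch, hh, hl, hsub⟩ := dedup_chain G _ _ le_rfl hc0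
  have hb' : (a :: m0 ++ [b]).getLast? = some b := by
    rw [show a :: m0 ++ [b] = (a :: m0) ++ [b] by simp, List.getLast?_append]; simp
  rw [hb'] at hl
  rw [show (a :: m0 ++ [b]).head? = some a from by simp] at hh
  cases l' with
  | nil => simp at hh
  | cons a' t =>
    simp only [List.head?_cons, Option.some.injEq] at hh
    subst hh
    rcases t.eq_nil_or_concat with rfl | ⟨m, y0, rfl⟩
    all_goals try rw [List.concat_eq_append] at hnd hch hl hsub
    · simp only [List.getLast?_singleton, Option.some.injEq] at hl
      exact absurd hl hab
    · have hly : (a' :: (m ++ [y0])).getLast? = some y0 := by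
        rw [show a' :: (m ++ [y0]) = (a' :: m) ++ [y0] by simp, List.getLast?_append]; simp
      rw [hly, Option.some.injEq] at hl
      subst hl
      refine ⟨m, ?_, hnd, hch⟩
      intro x hx
      have hx2 := hsub (by simp [hx] : x ∈ a' :: (m ++ [y0]))
      have hxa : x ≠ a' := by
        rintro rfl
        exact (List.nodup_cons.mp hnd).1 (by simp [hx])
      have hxb : x ≠ y0 := by
        rintro rfl
        have := (List.nodup_cons.mp hnd).2
        rw [List.nodup_append] at this
        exact this.2.2 _ hx _ (by simp) rfl
      simp only [List.cons_append, List.mem_cons, List.mem_append, List.mem_singleton] at hx2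
      rcases hx2 with rfl | hx2
      · exact absurd rfl hxa
      rcases hx2 with hx2 | hx2
      · exact hm0 _ hx2
      · rcases hx2 with rfl | h
        · exact absurd rfl hxb
        · simp at h

theorem no_cross {G : V → V → Prop} {u v : V} (hcyc : ∀ l : List V,
      (l ≠ [] ∧ l.Nodup ∧ ∀ p ∈ l.zip (l.rotate 1), G p.1 p.2) → l.length = 3)
    (huv : u ≠ v) (hGuv : ¬ G u v) (hGvu : ¬ G v u)
    {A A' : Set V} (hAu : u ∉ A) (hAv : v ∉ A) (hA'u : u ∉ A') (hA'v : v ∉ A')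
    (hdisj : ∀ x, x ∈ A → x ∈ A' → False)
    (h1 : Reach G A u v) (h2 : Reach G A' v u) : False := by
  obtain ⟨m1, hm1, hnd1, hc1⟩ := path_of_reach huv hAu hAv h1
  obtain ⟨m2, hm2, hnd2, hc2⟩ := path_of_reach huv.symm hA'v hA'u h2
  have hm1ne : m1 ≠ [] := by rintro rfl; exact hGuv (by simpa [List.Chain', List.isChain_pair] using hc1)
  have hm2ne : m2 ≠ [] := by rintro rfl; exact hGvu (by simpa [List.Chain', List.isChain_pair] using hc2)
  have hnodup : (u :: (m1 ++ v :: m2)).Nodup := by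
    rw [List.nodup_cons] at hnd1 hnd2 ⊢
    rw [List.nodup_append] at hnd1 hnd2
    obtain ⟨hu1, hm1nd, -, hdisj1⟩ := hnd1
    obtain ⟨hv2, hm2nd, -, hdisj2⟩ := hnd2
    constructor
    · intro hu
      simp only [List.mem_append, List.mem_cons] at hu
      rcases hu with hu | hu
      · exact hu1 (by simp [hu])
      rcases hu with rfl | hu
      · exact huv rfl
      · exact hdisj2 _ hu _ (by simp) rfl
    · rw [List.nodup_append]
      refine ⟨hm1nd, ?_, ?_⟩
      · rw [List.nodup_cons]
        exact ⟨fun hv => hv2 (by simp [hv]), hm2nd⟩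
      · intro x hx1 y hx2 hxy
        subst hxy
        simp only [List.mem_cons] at hx2
        rcases hx2 with rfl | hx2
        · exact hdisj1 _ hx1 _ (by simp) rfl
        · exact hdisj x (hm1 _ hx1) (hm2 _ hx2)
  have hchain : ((u :: (m1 ++ v :: m2)) ++ [u]).Chain' G := by
    have he : (u :: (m1 ++ v :: m2)) ++ [u] = (u :: (m1 ++ [v])) ++ (m2 ++ [u]) := by simp
    rw [he, List.Chain', List.isChain_append]
    refine ⟨hc1, ?_, ?_⟩
    · exact (List.isChain_cons.mp hc2).2
    · intro x hx y hy
      rw [show u :: (m1 ++ [v]) = (u :: m1) ++ [v] by simp, List.getLast?_append] at hx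
      simp only [List.getLast?_singleton, Option.or_some, Option.some_or, Option.mem_def,
        Option.some.injEq] at hx
      subst hx
      exact (List.isChain_cons.mp hc2).1 y hy
  have hlen := hcyc (u :: (m1 ++ v :: m2))
    ⟨by simp, hnodup, zip_rotate_chain _ _ hchain⟩
  have hl1 : 0 < m1.length := List.length_pos_iff.mpr hm1ne
  have hl2 : 0 < m2.length := List.length_pos_iff.mpr hm2ne
  simp only [List.length_cons, List.length_append] at hlen
  omega

def SStar (u v : V) : Set V := {w | w ≠ u ∧ w ≠ v}

def URStep (G : V → V → Prop) (u v : V) (p q : V) : Prop :=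
  (G p q ∨ G q p) ∧ p ∈ SStar u v ∧ q ∈ SStar u v

def UR (G : V → V → Prop) (u v : V) : V → V → Prop :=
  Relation.ReflTransGen (URStep G u v)

def cls (G : V → V → Prop) (u v c : V) : Set V := {x | UR G u v c x}

def ERel (G : V → V → Prop) (u v : V) (z z' : V) : Prop :=
  (z = u ∨ z = v) ∧ (z' = u ∨ z' = v) ∧ ∃ c, c ∈ SStar u v ∧ Reach G (cls G u v c) z z'

variable {G : V → V → Prop} {u v : V}

theorem UR.symm {a b : V} (h : UR G u v a b) : UR G u v b a :=
  (@Relation.ReflTransGen.stdSymm _ (URStep G u v) ⟨fun _ _ h => ⟨h.1.symm, h.2.2, h.2.1⟩⟩).symm _ _ h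

theorem UR.trans' {a b c : V} (h : UR G u v a b) (h2 : UR G u v b c) : UR G u v a c :=
  Relation.ReflTransGen.trans h h2

theorem UR.mem {a b : V} (h : UR G u v a b) (ha : a ∈ SStar u v) : b ∈ SStar u v := by
  induction h with
  | refl => exact ha
  | tail _ hstep _ => exact hstep.2.2

theorem cls_eq {c c' : V} (h : UR G u v c c') : cls G u v c = cls G u v c' :=
  Set.ext fun x => ⟨fun hx => (UR.symm h).trans' hx, fun hx => h.trans' hx⟩

theorem mem_cls_self {c : V} : c ∈ cls G u v c := Relation.ReflTransGen.refl

theorem cls_sub {c : V} (hc : c ∈ SStar u v) : cls G u v c ⊆ SStar u v :=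
  fun _ hx => UR.mem hx hc

theorem cls_closed {c x y : V} (hc : c ∈ SStar u v) (hx : x ∈ cls G u v c)
    (hy : y ∈ SStar u v) (h : G x y ∨ G y x) : y ∈ cls G u v c :=
  Relation.ReflTransGen.tail hx ⟨h, cls_sub hc hx, hy⟩

theorem L6 (hirr : Irreflexive G) (hGuv : ¬G u v) (hGvu : ¬G v u)
    {w b : V} (h : Relation.TransGen G w b) (hb : b = u ∨ b = v) :
    ((w = u ∨ w = v) → Relation.TransGen (ERel G u v) w b) ∧
      (w ∈ SStar u v → ∃ z, (z = u ∨ z = v) ∧ Reach G (cls G u v w) w z ∧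
        Relation.ReflTransGen (ERel G u v) z b) := by
  induction h using Relation.TransGen.head_induction_on with
  | single h' =>
    constructor
    · intro hw
      exfalso
      rcases hw with rfl | rfl <;> rcases hb with rfl | rfl
      exacts [hirr _ h', hGuv h', hGvu h', hirr _ h']
    · intro _
      exact ⟨b, hb, .single h', Relation.ReflTransGen.refl⟩
  | @head w' c hwc htail ihc =>
    by_cases hc : c = u ∨ c = v
    · have h1 : Relation.TransGen (ERel G u v) c b := ihc.1 hc
      constructor
      · intro hw
        exfalso
        rcases hw with rfl | rfl <;> rcases hc with rfl | rfl
        exacts [hirr _ hwc, hGuv hwc, hGvu hwc, hirr _ hwc]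
      · intro _
        exact ⟨c, hc, .single hwc, h1.to_reflTransGen⟩
    · push_neg at hc
      have hcs : c ∈ SStar u v := hc
      obtain ⟨z, hz, hreach, hrtg⟩ := ihc.2 hcs
      constructor
      · intro hw
        exact Relation.TransGen.head'
          ⟨hw, hz, c, hcs, .cons hwc mem_cls_self hreach⟩ hrtg
      · intro hw
        refine ⟨z, hz, ?_, hrtg⟩
        have heq : cls G u v w' = cls G u v c :=
          cls_eq (Relation.ReflTransGen.single ⟨Or.inl hwc, hw, hcs⟩)
        rw [heq]
        exact .cons hwc mem_cls_self hreach

theorem L6' (hirr : Irreflexive G) (hGuv : ¬G u v) (hGvu : ¬G v u)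
    {a w : V} (h : Relation.TransGen G a w) (ha : a = u ∨ a = v) :
    ((w = u ∨ w = v) → Relation.TransGen (ERel G u v) a w) ∧
      (w ∈ SStar u v → ∃ z, (z = u ∨ z = v) ∧ Reach G (cls G u v w) z w ∧
        Relation.ReflTransGen (ERel G u v) a z) := by
  induction h with
  | single h' =>
    constructor
    · intro hw
      exfalso
      rcases ha with rfl | rfl <;> rcases hw with rfl | rfl
      exacts [hirr _ h', hGuv h', hGvu h', hirr _ h']
    · intro _
      exact ⟨a, ha, .single h', Relation.ReflTransGen.refl⟩
  | @tail b w' htrans hstep ih =>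
    by_cases hbuv : b = u ∨ b = v
    · have h1 := ih.1 hbuv
      constructor
      · intro hw
        exfalso
        rcases hbuv with rfl | rfl <;> rcases hw with rfl | rfl
        exacts [hirr _ hstep, hGuv hstep, hGvu hstep, hirr _ hstep]
      · intro _
        exact ⟨b, hbuv, .single hstep, h1.to_reflTransGen⟩
    · push_neg at hbuv
      have hbs : b ∈ SStar u v := hbuv
      obtain ⟨z, hz, hreach, hrtg⟩ := ih.2 hbs
      constructor
      · intro hw
        exact Relation.TransGen.tail' hrtg
          ⟨hz, hw, b, hbs, Reach.snoc hreach mem_cls_self hstep⟩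
      · intro hw
        refine ⟨z, hz, ?_, hrtg⟩
        have heq : cls G u v w' = cls G u v b :=
          cls_eq (Relation.ReflTransGen.single ⟨Or.inr hstep, hw, hbs⟩)
        rw [heq]
        exact Reach.snoc hreach mem_cls_self hstep

theorem E_extract {x y : V} (hx : x = u ∨ x = v) (hy : y = u ∨ y = v)
    (hxy : x ≠ y) (h : Relation.TransGen (ERel G u v) x y) : ERel G u v x y := by
  have aux : ∀ w, Relation.TransGen (ERel G u v) w y → w = x → ERel G u v x y := by
    intro w h
    induction h using Relation.TransGen.head_induction_on with
    | single h' => rintro rfl; exact h'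
    | @head w' c hstep htail ihc =>
      intro hwx
      have hcxy : c = x ∨ c = y := by
        rcases hstep.2.1 with h'' | h'' <;> rcases hx with h1 | h1 <;> rcases hy with h2 | h2
        · exact Or.inl (h''.trans h1.symm)
        · exact Or.inl (h''.trans h1.symm)
        · exact Or.inr (h''.trans h2.symm)
        · exact absurd (h1.trans h2.symm) hxy
        · exact absurd (h1.trans h2.symm) hxy
        · exact Or.inr (h''.trans h2.symm)
        · exact Or.inl (h''.trans h1.symm)
        · exact Or.inl (h''.trans h1.symm)
      rcases hcxy with rfl | rfl
      · exact ihc rfl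
      · rw [hwx] at hstep
        exact hstep
  exact aux x h rfl

theorem UR_reachable (hirr : Irreflexive G) {a b : V} (h : UR G u v a b) (ha : a ∈ SStar u v) :
    ∀ hb : b ∈ {w : V | w ≠ u ∧ w ≠ v},
      ((Cyclic3.underlying G).induce {w : V | w ≠ u ∧ w ≠ v}).Reachable ⟨a, ha⟩ ⟨b, hb⟩ := by
  induction h with
  | refl => intro hb; exact SimpleGraph.Reachable.refl _
  | @tail p q hap hstep ih =>
    intro hq
    have hps : p ∈ SStar u v := hstep.2.1
    have hadj : ((Cyclic3.underlying G).induce {w : V | w ≠ u ∧ w ≠ v}).Adj ⟨p, hps⟩ ⟨q, hq⟩ := by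
      refine ⟨?_, hstep.1⟩
      rintro rfl
      rcases hstep.1 with h' | h' <;> exact hirr _ h'
    exact (ih hps).trans hadj.reachable

end C3A

open Cyclic3 in
/-- If `{u,v}` is a cutset of the underlying graph of an unbreakable 3-cyclic digraph
`G`, then `u` and `v` are adjacent in `G`. -/
theorem stmt_15 {V : Type*} [Fintype V] (G : V → V → Prop)
    (hirr : Irreflexive G) (hunb : Unbreakable G) (hcyc : IsLCyclic G 3)
    (u v : V) (huv : u ≠ v)
    (hcut : ¬ ((underlying G).induce {w : V | w ≠ u ∧ w ≠ v}).Preconnected) :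
    G u v ∨ G v u := by
  classical
  by_contra hno
  push_neg at hno
  obtain ⟨hGuv, hGvu⟩ := hno
  have hTG : ∀ a b : V, a ≠ b → Relation.TransGen G a b := by
    intro a b hab
    obtain ⟨l, h1, h2, h3⟩ := hunb.1.2 a b
    exact C3A.rtg_to_tg (C3A.chain_rtg G l a b h1 h2 h3) hab
  rw [SimpleGraph.Preconnected] at hcut
  push_neg at hcut
  obtain ⟨x0, y0, hxy0⟩ := hcut
  have hnur : ¬ C3A.UR G u v ↑x0 ↑y0 := by
    intro h
    exact hxy0 (C3A.UR_reachable hirr h x0.2 y0.2)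
  have hTuv := hTG u v huv
  have hTvu := hTG v u huv.symm
  have hEuv : Relation.TransGen (C3A.ERel G u v) u v :=
    (C3A.L6' hirr hGuv hGvu hTuv (Or.inl rfl)).1 (Or.inr rfl)
  have hEvu : Relation.TransGen (C3A.ERel G u v) v u :=
    (C3A.L6 hirr hGuv hGvu hTvu (Or.inl rfl)).1 (Or.inr rfl)
  obtain ⟨-, -, c, hcs, hRc⟩ := C3A.E_extract (Or.inl rfl) (Or.inr rfl) huv hEuv
  obtain ⟨-, -, c', hc's, hRc'⟩ := C3A.E_extract (Or.inr rfl) (Or.inl rfl) huv.symm hEvu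
  have hcyc' : ∀ l : List V,
      (l ≠ [] ∧ l.Nodup ∧ ∀ p ∈ l.zip (l.rotate 1), G p.1 p.2) → l.length = 3 :=
    fun l h => hcyc l h
  have hUcc' : C3A.UR G u v c c' := by
    by_contra hne
    refine C3A.no_cross hcyc' huv hGuv hGvu ?_ ?_ ?_ ?_ ?_ hRc hRc'
    · exact fun h => (C3A.cls_sub hcs h).1 rfl
    · exact fun h => (C3A.cls_sub hcs h).2 rfl
    · exact fun h => (C3A.cls_sub hc's h).1 rfl
    · exact fun h => (C3A.cls_sub hc's h).2 rfl
    · intro x hx hx'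
      exact hne ((hx : C3A.UR G u v c x).trans' (C3A.UR.symm hx'))
  have hBvu : C3A.Reach G (C3A.cls G u v c) v u := by
    rw [C3A.cls_eq hUcc']; exact hRc'
  have hb0 : ∃ b₀ : V, b₀ ∈ C3A.SStar u v ∧ ¬ C3A.UR G u v c b₀ := by
    by_cases h1 : C3A.UR G u v c ↑x0
    · exact ⟨↑y0, y0.2, fun h2 => hnur ((C3A.UR.symm h1).trans' h2)⟩
    · exact ⟨↑x0, x0.2, h1⟩
  obtain ⟨b₀, hb0s, hncb⟩ := hb0
  have hsubB : C3A.cls G u v b₀ ⊆ C3A.SStar u v := C3A.cls_sub hb0s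
  have hB'uv : ¬ C3A.Reach G (C3A.cls G u v b₀) u v := by
    intro h
    refine C3A.no_cross hcyc' huv hGuv hGvu ?_ ?_ ?_ ?_ ?_ h hBvu
    · exact fun h' => (hsubB h').1 rfl
    · exact fun h' => (hsubB h').2 rfl
    · exact fun h' => (C3A.cls_sub hcs h').1 rfl
    · exact fun h' => (C3A.cls_sub hcs h').2 rfl
    · intro x hx hx'
      exact hncb ((hx' : C3A.UR G u v c x).trans' (C3A.UR.symm hx))
  have hB'vu : ¬ C3A.Reach G (C3A.cls G u v b₀) v u := by
    intro h
    refine C3A.no_cross hcyc' huv hGuv hGvu ?_ ?_ ?_ ?_ ?_ hRc h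
    · exact fun h' => (C3A.cls_sub hcs h').1 rfl
    · exact fun h' => (C3A.cls_sub hcs h').2 rfl
    · exact fun h' => (hsubB h').1 rfl
    · exact fun h' => (hsubB h').2 rfl
    · intro x hx hx'
      exact hncb ((hx : C3A.UR G u v c x).trans' (C3A.UR.symm hx'))
  have hIn : ∀ x, x ∈ C3A.cls G u v b₀ →
      ∃ z, (z = u ∨ z = v) ∧ C3A.Reach G (C3A.cls G u v b₀) z x := by
    intro x hx
    have hxs := hsubB hx
    obtain ⟨z, hz, hr, -⟩ :=
      (C3A.L6' hirr hGuv hGvu (hTG u x (Ne.symm hxs.1)) (Or.inl rfl)).2 hxs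
    refine ⟨z, hz, ?_⟩
    rw [show C3A.cls G u v b₀ = C3A.cls G u v x from C3A.cls_eq hx]
    exact hr
  have hOut : ∀ x, x ∈ C3A.cls G u v b₀ →
      ∃ z, (z = u ∨ z = v) ∧ C3A.Reach G (C3A.cls G u v b₀) x z := by
    intro x hx
    have hxs := hsubB hx
    obtain ⟨z, hz, hr, -⟩ :=
      (C3A.L6 hirr hGuv hGvu (hTG x u hxs.1) (Or.inl rfl)).2 hxs
    refine ⟨z, hz, ?_⟩
    rw [show C3A.cls G u v b₀ = C3A.cls G u v x from C3A.cls_eq hx]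
    exact hr
  have hCst : ∀ x, x ∈ C3A.cls G u v b₀ → ∀ z z', (z = u ∨ z = v) → (z' = u ∨ z' = v) →
      C3A.Reach G (C3A.cls G u v b₀) z x → C3A.Reach G (C3A.cls G u v b₀) x z' → z = z' := by
    intro x hx z z' hz hz' h1 h2
    have hzz' := h1.comp hx h2
    rcases hz with rfl | rfl <;> rcases hz' with rfl | rfl
    · rfl
    · exact absurd hzz' hB'uv
    · exact absurd hzz' hB'vu
    · rfl
  obtain ⟨z₀, hz₀uv, hz₀b⟩ := hIn b₀ C3A.mem_cls_self
  have hb₀z : C3A.Reach G (C3A.cls G u v b₀) b₀ z₀ := by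
    obtain ⟨z1, hz1uv, hz1⟩ := hOut b₀ C3A.mem_cls_self
    have := hCst b₀ C3A.mem_cls_self z₀ z1 hz₀uv hz1uv hz₀b hz1
    rw [this]; exact hz1
  have hfix : ∀ x, x ∈ C3A.cls G u v b₀ →
      C3A.Reach G (C3A.cls G u v b₀) z₀ x ∧ C3A.Reach G (C3A.cls G u v b₀) x z₀ := by
    intro x hx
    induction hx with
    | refl => exact ⟨hz₀b, hb₀z⟩
    | @tail p q hup hstep ih =>
      have hp : p ∈ C3A.cls G u v b₀ := hup
      have hq : q ∈ C3A.cls G u v b₀ := Relation.ReflTransGen.tail hup hstep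
      obtain ⟨zin, hzinuv, hzin⟩ := hIn q hq
      obtain ⟨zout, hzoutuv, hzout⟩ := hOut q hq
      rcases hstep.1 with hpq | hqp
      · have h1 : C3A.Reach G (C3A.cls G u v b₀) z₀ q := ih.1.snoc hp hpq
        have h2 : z₀ = zout := hCst q hq z₀ zout hz₀uv hzoutuv h1 hzout
        exact ⟨h1, by rw [h2]; exact hzout⟩
      · have h2 : C3A.Reach G (C3A.cls G u v b₀) q z₀ := C3A.Reach.cons hqp hp ih.2
        have h1 : zin = z₀ := hCst q hq zin z₀ hzinuv hz₀uv hzin h2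
        exact ⟨by rw [← h1]; exact hzin, h2⟩
  rcases hz₀uv with hz | hz
  · -- z₀ = u ; v has no edges to the class of b₀
    have hno_edge : ∀ x, x ∈ C3A.cls G u v b₀ → ¬ G v x ∧ ¬ G x v := by
      intro x hx
      constructor
      · intro h
        have := hCst x hx v z₀ (Or.inr rfl) (Or.inl hz)
          (C3A.Reach.single h) (hfix x hx).2
        exact huv (this.trans hz).symm
      · intro h
        have := hCst x hx z₀ v (Or.inl hz) (Or.inr rfl)
          (hfix x hx).1 (C3A.Reach.single h)
        exact huv (hz.symm.trans this)
    have hconn := (hunb.2.2 u).preconnected ⟨b₀, hb0s.1⟩ ⟨c, hcs.1⟩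
    rw [SimpleGraph.reachable_iff_reflTransGen] at hconn
    have key : ∀ p : ↥{w : V | w ≠ u},
        Relation.ReflTransGen ((underlying G).induce {w : V | w ≠ u}).Adj
          ⟨b₀, hb0s.1⟩ p → ↑p ∈ C3A.cls G u v b₀ := by
      intro p hp
      induction hp with
      | refl => exact C3A.mem_cls_self
      | @tail q r hq hstep ih =>
        have hadj : (underlying G).Adj ↑q ↑r := hstep
        have hrv : (r : V) ≠ v := by
          intro hrv
          rcases hadj.2 with h' | h'
          · exact (hno_edge ↑q ih).2 (hrv ▸ h')
          · exact (hno_edge ↑q ih).1 (hrv ▸ h')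
        exact C3A.cls_closed hb0s ih ⟨r.2, hrv⟩ hadj.2
    exact hncb (C3A.UR.symm (key _ hconn))
  · -- z₀ = v ; u has no edges to the class of b₀
    have hno_edge : ∀ x, x ∈ C3A.cls G u v b₀ → ¬ G u x ∧ ¬ G x u := by
      intro x hx
      constructor
      · intro h
        have := hCst x hx u z₀ (Or.inl rfl) (Or.inr hz)
          (C3A.Reach.single h) (hfix x hx).2
        exact huv (this.trans hz)
      · intro h
        have := hCst x hx z₀ u (Or.inr hz) (Or.inl rfl)
          (hfix x hx).1 (C3A.Reach.single h)
        exact huv (hz.symm.trans this).symm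
    have hconn := (hunb.2.2 v).preconnected ⟨b₀, hb0s.2⟩ ⟨c, hcs.2⟩
    rw [SimpleGraph.reachable_iff_reflTransGen] at hconn
    have key : ∀ p : ↥{w : V | w ≠ v},
        Relation.ReflTransGen ((underlying G).induce {w : V | w ≠ v}).Adj
          ⟨b₀, hb0s.2⟩ p → ↑p ∈ C3A.cls G u v b₀ := by
      intro p hp
      induction hp with
      | refl => exact C3A.mem_cls_self
      | @tail q r hq hstep ih =>
        have hadj : (underlying G).Adj ↑q ↑r := hstep
        have hru : (r : V) ≠ u := by
          intro hru
          rcases hadj.2 with h' | h'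
          · exact (hno_edge ↑q ih).2 (hru ▸ h')
          · exact (hno_edge ↑q ih).1 (hru ▸ h')
        exact C3A.cls_closed hb0s ih ⟨hru, r.2⟩ hadj.2
    exact hncb (C3A.UR.symm (key _ hconn))
end

section
/- Let G be an unbreakable 3-cyclic digraph with edge uv such that {u,v} is a cutset of G⁻. Then for every component B of G⁻ ∖ {u,v}, the edge uv is a special edge of the induced subdigraph G[B ∪ {u,v}]. -/
section Aux
open Relation

variable {V : Type*}

section auxlist
variable {r G : V → V → Prop}

lemma aux_chain_rtg : ∀ (l : List V) (p q : V), l.head? = some p → l.getLast? = some q →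
    l.Chain' r → Relation.ReflTransGen r p q := by
  intro l
  induction l with
  | nil => intro p q h; simp at h
  | cons a t ih =>
    intro p q hh hl hc
    simp at hh
    subst hh
    cases t with
    | nil => simp at hl; subst hl; exact .refl
    | cons b t' =>
      have h1 : r a b := (List.isChain_cons_cons.mp hc).1
      have h2 := ih b q rfl (by simpa using hl) (List.isChain_cons_cons.mp hc).2
      exact .head h1 h2

lemma aux_rtg_chain {p q : V} (h : Relation.ReflTransGen r p q) :
    ∃ l : List V, l.head? = some p ∧ l.getLast? = some q ∧ l.Chain' r := by
  induction h using Relation.ReflTransGen.head_induction_on with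
  | refl => exact ⟨[q], rfl, rfl, List.isChain_singleton _⟩
  | head h1 h2 ih =>
    obtain ⟨l, hh, hl, hc⟩ := ih
    cases l with
    | nil => simp at hh
    | cons c t =>
      simp at hh; subst hh
      exact ⟨_ :: c :: t, rfl, by simpa using hl, List.isChain_cons_cons.mpr ⟨h1, hc⟩⟩

lemma aux_getLast?_cons {a : V} {m : List V} (h : m ≠ []) :
    (a :: m).getLast? = m.getLast? := by
  rw [show a :: m = [a] ++ m from rfl, List.getLast?_append_of_ne_nil _ h]

lemma aux_w2p : ∀ (n : ℕ) (l : List V), l.length ≤ n → l.Chain' r → l ≠ [] →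
    ∃ m, m ≠ [] ∧ m.Nodup ∧ m.head? = l.head? ∧ m.getLast? = l.getLast? ∧
      (∀ x ∈ m, x ∈ l) ∧ m.Chain' r := by
  intro n
  induction n with
  | zero => intro l hle _ hne; interval_cases h : l.length; simp_all
  | succ n ih =>
    intro l hle hc hne
    cases l with
    | nil => simp at hne
    | cons a t =>
      by_cases ha : a ∈ t
      · obtain ⟨s1, t1, rfl⟩ := List.append_of_mem ha
        have hsuff : (a :: t1) <:+ (a :: (s1 ++ a :: t1)) := ⟨a :: s1, by simp⟩
        have hc' : (a :: t1).Chain' r := hc.suffix hsuff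
        have hlen : (a :: t1).length ≤ n := by
          simp [List.length_append] at hle ⊢; omega
        obtain ⟨m, h1, h2, h3, h4, h5, h6⟩ := ih _ hlen hc' (by simp)
        refine ⟨m, h1, h2, by simpa using h3, ?_, fun x hx => ?_, h6⟩
        · have : (a :: (s1 ++ a :: t1)) = (a :: s1) ++ (a :: t1) := by simp
          rw [h4, this, List.getLast?_append_cons]
        · have := h5 x hx
          simp at this ⊢
          tauto
      · cases t with
        | nil => exact ⟨[a], by simp, by simp, rfl, rfl, by simp, List.isChain_singleton _⟩
        | cons b t' =>
          have hc2 := (List.isChain_cons_cons.mp hc).2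
          obtain ⟨m, h1, h2, h3, h4, h5, h6⟩ := ih (b :: t') (by simpa using hle) hc2 (by simp)
          refine ⟨a :: m, by simp, ?_, rfl, ?_, ?_, ?_⟩
          · exact List.nodup_cons.mpr ⟨fun hx => ha (by simpa using h5 a hx), h2⟩
          · rw [aux_getLast?_cons h1, h4, List.getLast?_cons_cons]
          · intro x hx; rcases List.mem_cons.mp hx with rfl | hx
            · simp
            · simp [List.mem_cons]; right; simpa using h5 x hx
          · refine List.isChain_cons.mpr ⟨fun y hy => ?_, h6⟩
            rw [h3] at hy
            simp at hy; subst hy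
            exact (List.isChain_cons_cons.mp hc).1

lemma aux_rtg_path {p q : V} (h : Relation.ReflTransGen r p q) :
    ∃ m : List V, m ≠ [] ∧ m.Nodup ∧ m.head? = some p ∧ m.getLast? = some q ∧ m.Chain' r := by
  obtain ⟨l, hh, hl, hc⟩ := aux_rtg_chain h
  obtain ⟨m, h1, h2, h3, h4, h5, h6⟩ := aux_w2p l.length l le_rfl hc
    (by rintro rfl; simp at hh)
  exact ⟨m, h1, h2, by rw [h3, hh], by rw [h4, hl], h6⟩

lemma aux_chain_targets : ∀ (t : List V) (a : V), List.Chain' r (a :: t) →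
    ∀ x ∈ t, ∃ z, r z x := by
  intro t
  induction t with
  | nil => simp
  | cons b t' ih =>
    intro a hc x hx
    rcases List.mem_cons.mp hx with rfl | hx
    · exact ⟨a, (List.isChain_cons_cons.mp hc).1⟩
    · exact ih b (List.isChain_cons_cons.mp hc).2 x hx

lemma aux_rtg_mem {Q : V → Prop} (h : ∀ a b, r a b → Q b) :
    ∀ {p q : V}, Relation.ReflTransGen r p q → Q p → Q q := by
  intro p q hr
  induction hr with
  | refl => exact id
  | tail _ h2 _ => exact fun _ => h _ _ h2

lemma aux_reach_closed {V' : Type*} {K : SimpleGraph V'} {P : V' → Prop}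
    (hcl : ∀ a b, K.Adj a b → P a → P b) :
    ∀ {a b}, K.Reachable a b → P a → P b := by
  intro a b hr
  obtain ⟨wk⟩ := hr
  induction wk with
  | nil => exact id
  | cons h p ih => exact fun ha => ih (hcl _ _ h ha)

lemma aux_chain2 {a b : V} (h1 : G a b) : List.Chain' G [a, b] :=
  List.isChain_cons_cons.mpr ⟨h1, List.isChain_singleton _⟩

lemma aux_chain4 {a b c d : V} (h1 : G a b) (h2 : G b c) (h3 : G c d) :
    List.Chain' G [a, b, c, d] :=
  List.isChain_cons_cons.mpr ⟨h1, List.isChain_cons_cons.mpr ⟨h2, aux_chain2 h3⟩⟩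

end auxlist

open Cyclic3

variable {G : V → V → Prop}

lemma aux_wrap' : ∀ (t : List V) (a c : V),
    (∀ pr ∈ (a :: t).zip (t ++ [c]), G pr.1 pr.2) ↔ List.Chain' G (a :: (t ++ [c])) := by
  intro t
  induction t with
  | nil => intro a c; simp [List.Chain', List.isChain_cons_cons, List.isChain_singleton]
  | cons b t' ih =>
    intro a c
    have hz : (a :: b :: t').zip (b :: t' ++ [c]) = (a, b) :: (b :: t').zip (t' ++ [c]) := rfl
    rw [hz]
    simp only [List.Chain', List.cons_append, List.isChain_cons_cons, List.mem_cons]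
    constructor
    · intro h
      refine ⟨h (a, b) (Or.inl rfl), (ih b c).mp fun pr hpr => h pr (Or.inr hpr)⟩
    · rintro ⟨h1, h2⟩ pr hpr
      rcases hpr with rfl | hpr
      · exact h1
      · exact (ih b c).mpr h2 pr hpr

lemma aux_mk_dicycle {a : V} {t : List V} (hnd : (a :: t).Nodup)
    (hch : List.Chain' G (a :: (t ++ [a]))) : IsDicycle G (a :: t) := by
  refine ⟨by simp, hnd, ?_⟩
  have hrot : (a :: t).rotate 1 = t ++ [a] := by
    rw [show (1 : ℕ) = 0 + 1 from rfl, List.rotate_cons_succ, List.rotate_zero]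
  rw [hrot]
  exact (aux_wrap' t a a).mpr hch

lemma aux_cyc_len (hcyc : IsLCyclic G 3) (m E : List V) (p q : V)
    (hm : m.Nodup) (hE : E.Nodup) (hdisj : ∀ x ∈ m, x ∉ E)
    (hch : m.Chain' G) (hhd : m.head? = some p) (hlast : m.getLast? = some q)
    (hchE : List.Chain' G (q :: (E ++ [p]))) : m.length + E.length = 3 := by
  cases m with
  | nil => simp at hhd
  | cons a mt =>
    simp only [List.head?_cons, Option.some.injEq] at hhd
    subst hhd
    have hnd : (a :: (mt ++ E)).Nodup := by
      have := List.Nodup.append hm hE (fun x hx => hdisj x hx)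
      simpa using this
    have hch2 : List.Chain' G (a :: ((mt ++ E) ++ [a])) := by
      have heq : a :: ((mt ++ E) ++ [a]) = (a :: mt) ++ (E ++ [a]) := by simp
      rw [heq]
      refine List.isChain_append.mpr ⟨hch, hchE.tail, ?_⟩
      intro x hx y hy
      rw [hlast] at hx
      simp only [Option.mem_def, Option.some.injEq] at hx
      subst hx
      exact (List.isChain_cons.mp hchE).1 y hy
    have := hcyc _ (aux_mk_dicycle hnd hch2)
    simp only [List.length_cons, List.length_append] at this
    simp only [List.length_cons]
    omega

end Aux

open Cyclic3 in
/-- Let `G` be an unbreakable 3-cyclic digraph with an edge `uv` such that `{u,v}` is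
a cutset of `G⁻`. Then for every component `B` of `G⁻ ∖ {u,v}`, the edge `uv` is a
special edge of the induced subdigraph `G[B ∪ {u,v}]`. -/
theorem stmt_16 {V : Type*} [Fintype V] (G : V → V → Prop)
    (hirr : Irreflexive G) (hunb : Unbreakable G) (hcyc : IsLCyclic G 3)
    (u v : V) (huv : G u v)
    (hcut : ¬ ((underlying G).induce {w : V | w ≠ u ∧ w ≠ v}).Preconnected)
    (B : Set V) (hB : IsCompOf (underlying G) {w : V | w ≠ u ∧ w ≠ v} B) :
    SpecialEdge
      (fun x y => G x y ∧ x ∈ B ∪ {u, v} ∧ y ∈ B ∪ {u, v}) u v := by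
  classical
  obtain ⟨hBne, hBs, hBconn, hBcl⟩ := hB
  have hGne : ∀ {p q : V}, G p q → p ≠ q := fun {p q} h hpq => hirr q (hpq ▸ h)
  have hne : u ≠ v := hGne huv
  have hsc : ∀ p q : V, Relation.ReflTransGen G p q := by
    intro p q
    obtain ⟨l, hh, hl, hc⟩ := hunb.1.2 p q
    exact aux_chain_rtg l p q hh hl hc
  -- every edge lies on a triangle
  have htri : ∀ {α β : V}, G α β → ∃ γ, G β γ ∧ G γ α := by
    intro α β h
    obtain ⟨m, hm1, hm2, hm3, hm4, hm5⟩ := aux_rtg_path (hsc β α)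
    have hlen := aux_cyc_len hcyc m [] β α hm2 (by simp) (by simp) hm5 hm3 hm4
      (aux_chain2 h)
    have hlen3 : m.length = 3 := by simpa using hlen
    obtain ⟨x, y, z, rfl⟩ := List.length_eq_three.mp hlen3
    simp only [List.head?_cons, Option.some.injEq] at hm3
    subst hm3
    have hz : z = α := by
      simp [List.getLast?_cons_cons] at hm4
      exact hm4
    subst hz
    simp only [List.Chain', List.isChain_cons_cons, List.isChain_singleton, and_true] at hm5
    exact ⟨y, hm5.1, hm5.2⟩
  by_contra hns
  have hHuv : (fun x y => G x y ∧ x ∈ B ∪ {u, v} ∧ y ∈ B ∪ {u, v}) u v :=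
    ⟨huv, Or.inr (by simp), Or.inr (by simp)⟩
  have hnotor : ¬ ({w | (fun x y => G x y ∧ x ∈ B ∪ {u, v} ∧ y ∈ B ∪ {u, v}) u w}.ncard = 1 ∨
      {w | (fun x y => G x y ∧ x ∈ B ∪ {u, v} ∧ y ∈ B ∪ {u, v}) w v}.ncard = 1) :=
    fun h => hns ⟨hHuv, h⟩
  -- extract a second out-neighbour w of u inside B
  have hexw : ∃ w, ((fun x y => G x y ∧ x ∈ B ∪ {u, v} ∧ y ∈ B ∪ {u, v}) u w) ∧ w ≠ v := by
    by_contra h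
    push_neg at h
    refine hnotor (Or.inl ?_)
    have hset : {w | (fun x y => G x y ∧ x ∈ B ∪ {u, v} ∧ y ∈ B ∪ {u, v}) u w} = {v} :=
      Set.eq_singleton_iff_unique_mem.mpr ⟨hHuv, fun b hb => h b hb⟩
    rw [hset, Set.ncard_singleton]
  obtain ⟨w, ⟨hGuw, -, hwmem⟩, hwv⟩ := hexw
  have hwu : w ≠ u := (hGne hGuw).symm
  have hwB : w ∈ B := by
    rcases hwmem with h | h
    · exact h
    · simp only [Set.mem_insert_iff, Set.mem_singleton_iff] at h
      rcases h with h | h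
      · exact absurd h hwu
      · exact absurd h hwv
  -- extract a second in-neighbour x of v inside B
  have hexx : ∃ x, ((fun x y => G x y ∧ x ∈ B ∪ {u, v} ∧ y ∈ B ∪ {u, v}) x v) ∧ x ≠ u := by
    by_contra h
    push_neg at h
    refine hnotor (Or.inr ?_)
    have hset : {w | (fun x y => G x y ∧ x ∈ B ∪ {u, v} ∧ y ∈ B ∪ {u, v}) w v} = {u} :=
      Set.eq_singleton_iff_unique_mem.mpr ⟨hHuv, fun b hb => h b hb⟩
    rw [hset, Set.ncard_singleton]
  obtain ⟨x, ⟨hGxv, hxmem, -⟩, hxu⟩ := hexx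
  have hxv : x ≠ v := hGne hGxv
  have hxB : x ∈ B := by
    rcases hxmem with h | h
    · exact h
    · simp only [Set.mem_insert_iff, Set.mem_singleton_iff] at h
      rcases h with h | h
      · exact absurd h hxu
      · exact absurd h hxv
  by_cases hexa : ∃ a, G v a ∧ G a u ∧ a ∉ B
  · -- there is a 2-path from v to u outside B
    obtain ⟨a, hva, hau, haB⟩ := hexa
    have hau' : a ≠ u := hGne hau
    have hav : a ≠ v := (hGne hva).symm
    -- W : set of vertices of B reachable within B from an out-neighbour of u
    have hC1 : ∀ b, (∃ b₀, G u b₀ ∧ b₀ ∈ B ∧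
        Relation.ReflTransGen (fun p q => G p q ∧ p ∈ B ∧ q ∈ B) b₀ b) → ¬ G b v := by
      rintro b ⟨b₀, hub₀, hb₀B, hr⟩ hbv
      obtain ⟨m, hm1, hm2, hm3, hm4, hm5⟩ := aux_rtg_path hr
      have hmem : ∀ y ∈ m, y ∈ B := by
        intro y hy
        cases m with
        | nil => simp at hy
        | cons c mt =>
          simp only [List.head?_cons, Option.some.injEq] at hm3
          subst hm3
          rcases List.mem_cons.mp hy with rfl | hy
          · exact hb₀B
          · obtain ⟨z, hz⟩ := aux_chain_targets mt _ hm5 y hy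
            exact hz.2.2
      have hndm : (u :: m).Nodup :=
        List.nodup_cons.mpr ⟨fun hu' => (hBs (hmem u hu')).1 rfl, hm2⟩
      have hlen := aux_cyc_len hcyc (u :: m) [v, a] u b hndm
        (by simp; exact fun h => hav (h.symm))
        (by
          intro y hy hyE
          simp only [List.mem_cons, List.not_mem_nil, or_false] at hyE
          rcases List.mem_cons.mp hy with rfl | hym
          · rcases hyE with h | h
            · exact hne h
            · exact hau' h.symm
          · rcases hyE with h | h
            · exact (hBs (hmem y hym)).2 h
            · exact haB (h ▸ hmem y hym))
        (List.isChain_cons.mpr ⟨fun y hy => by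
            rw [hm3] at hy; simp only [Option.mem_def, Option.some.injEq] at hy
            subst hy; exact hub₀,
          hm5.imp (fun _ _ h => h.1)⟩)
        rfl
        (by rw [aux_getLast?_cons hm1]; exact hm4)
        (aux_chain4 hbv hva hau)
      simp only [List.length_cons, List.length_nil] at hlen
      have : m.length = 0 := by omega
      exact hm1 (List.length_eq_zero_iff.mp this)
    have hC3 : ∀ b, (∃ b₀, G u b₀ ∧ b₀ ∈ B ∧
        Relation.ReflTransGen (fun p q => G p q ∧ p ∈ B ∧ q ∈ B) b₀ b) →
        ∀ z, G b z → z ∈ B → (∃ b₀, G u b₀ ∧ b₀ ∈ B ∧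
          Relation.ReflTransGen (fun p q => G p q ∧ p ∈ B ∧ q ∈ B) b₀ z) := by
      rintro b ⟨b₀, h1, h2, hr⟩ z hbz hzB
      exact ⟨b₀, h1, h2, hr.tail ⟨hbz,
        aux_rtg_mem (fun _ _ h => h.2.2) hr h2, hzB⟩⟩
    have hwW : ∃ b₀, G u b₀ ∧ b₀ ∈ B ∧
        Relation.ReflTransGen (fun p q => G p q ∧ p ∈ B ∧ q ∈ B) b₀ w :=
      ⟨w, hGuw, hwB, .refl⟩
    have hxW : ¬ ∃ b₀, G u b₀ ∧ b₀ ∈ B ∧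
        Relation.ReflTransGen (fun p q => G p q ∧ p ∈ B ∧ q ∈ B) b₀ x :=
      fun h => hC1 x h hGxv
    -- find a boundary pair
    have hpair : ∃ p q : V, (∃ b₀, G u b₀ ∧ b₀ ∈ B ∧
        Relation.ReflTransGen (fun p' q' => G p' q' ∧ p' ∈ B ∧ q' ∈ B) b₀ p) ∧ q ∈ B ∧
        ¬ (∃ b₀, G u b₀ ∧ b₀ ∈ B ∧
          Relation.ReflTransGen (fun p' q' => G p' q' ∧ p' ∈ B ∧ q' ∈ B) b₀ q) ∧
        (underlying G).Adj p q := by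
      by_contra hno
      have hreach := hBconn.preconnected ⟨w, hwB⟩ ⟨x, hxB⟩
      refine hxW (aux_reach_closed (K := (underlying G).induce B)
        (P := fun z => ∃ b₀, G u b₀ ∧ b₀ ∈ B ∧
          Relation.ReflTransGen (fun p' q' => G p' q' ∧ p' ∈ B ∧ q' ∈ B) b₀ z.1)
        ?_ hreach hwW)
      intro a' b' hadj ha'
      by_contra hb'
      exact hno ⟨a'.1, b'.1, ha', b'.2, hb', hadj⟩
    obtain ⟨p, q, hpW, hqB, hqW, hadjpq⟩ := hpair
    have hpB : p ∈ B := by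
      obtain ⟨b₀, _, h2, hr⟩ := hpW
      exact aux_rtg_mem (fun _ _ h => h.2.2) hr h2
    have hGqp : G q p := by
      rcases hadjpq.2 with h | h
      · exact absurd (hC3 p hpW q h hqB) hqW
      · exact h
    obtain ⟨z, hpz, hzq⟩ := htri hGqp
    by_cases hzu : z = u
    · subst hzu
      exact hqW ⟨q, hzq, hqB, .refl⟩
    by_cases hzv : z = v
    · subst hzv
      exact hC1 p hpW hpz
    have hzB : z ∈ B := hBcl p hpB z ⟨hzu, hzv⟩
      ⟨hGne hpz, Or.inl hpz⟩
    exact hqW (hC3 z (hC3 p hpW z hpz hzB) q hzq hqB)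
  · -- all 2-paths from v to u go through B
    push_neg at hexa
    obtain ⟨e, hve, heu⟩ := htri huv
    have heB : e ∈ B := hexa e hve heu
    have heu' : e ≠ u := hGne heu
    have hev : e ≠ v := (hGne hve).symm
    -- C = other side, nonempty
    have hCex : ∃ y, (y ≠ u ∧ y ≠ v) ∧ y ∉ B := by
      by_contra h
      push_neg at h
      apply hcut
      have hBeq : B = {w : V | w ≠ u ∧ w ≠ v} :=
        Set.Subset.antisymm hBs (fun y hy => h y hy)
      exact hBeq ▸ hBconn.preconnected
    obtain ⟨y₀, hy₀s, hy₀B⟩ := hCex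
    set C : Set V := {y | (y ≠ u ∧ y ≠ v) ∧ y ∉ B} with hC
    set rC : V → V → Prop := fun p q => G p q ∧ p ∈ C ∧ q ∈ C with hrC
    set Uin : V → Prop := fun y => ∃ c, G u c ∧ c ∈ C ∧ Relation.ReflTransGen rC c y with hUin
    set Vin : V → Prop := fun y => ∃ c, G v c ∧ c ∈ C ∧ Relation.ReflTransGen rC c y with hVin
    set Uout : V → Prop := fun y => ∃ c, Relation.ReflTransGen rC y c ∧ G c u with hUout
    set Vout : V → Prop := fun y => ∃ c, Relation.ReflTransGen rC y c ∧ G c v with hVout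
    -- paths within C
    have hpathC : ∀ {c d : V}, c ∈ C → Relation.ReflTransGen rC c d →
        ∃ m : List V, m ≠ [] ∧ m.Nodup ∧ m.head? = some c ∧ m.getLast? = some d ∧
          m.Chain' G ∧ ∀ y ∈ m, y ∈ C := by
      intro c d hc hr
      obtain ⟨m, h1, h2, h3, h4, h5⟩ := aux_rtg_path hr
      refine ⟨m, h1, h2, h3, h4, h5.imp (fun _ _ h => h.1), ?_⟩
      intro y hy
      cases m with
      | nil => simp at hy
      | cons c' mt =>
        simp only [List.head?_cons, Option.some.injEq] at h3
        subst h3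
        rcases List.mem_cons.mp hy with rfl | hy
        · exact hc
        · obtain ⟨z, hz⟩ := aux_chain_targets mt _ h5 y hy
          exact hz.2.2
    have hB3 : ∀ y, Uin y → Vout y → False := by
      rintro y ⟨c, huc, hcC, hr1⟩ ⟨d, hr2, hdv⟩
      obtain ⟨m, h1, h2, h3, h4, h5, h6⟩ := hpathC hcC (hr1.trans hr2)
      have hndm : (u :: m).Nodup :=
        List.nodup_cons.mpr ⟨fun hu' => (h6 u hu').1.1 rfl, h2⟩
      have hlen := aux_cyc_len hcyc (u :: m) [v, e] u d hndm
        (by simp; exact fun h => hev (h.symm))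
        (by
          intro y' hy' hyE
          simp only [List.mem_cons, List.not_mem_nil, or_false] at hyE
          rcases List.mem_cons.mp hy' with rfl | hym
          · rcases hyE with h | h
            · exact hne h
            · exact heu' h.symm
          · rcases hyE with h | h
            · exact (h6 y' hym).1.2 h
            · exact (h6 y' hym).2 (h ▸ heB))
        (List.isChain_cons.mpr ⟨fun y' hy' => by
            rw [h3] at hy'; simp only [Option.mem_def, Option.some.injEq] at hy'
            subst hy'; exact huc,
          h5⟩)
        rfl
        (by rw [aux_getLast?_cons h1]; exact h4)
        (aux_chain4 hdv hve heu)
      simp only [List.length_cons, List.length_nil] at hlen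
      have : m.length = 0 := by omega
      exact h1 (List.length_eq_zero_iff.mp this)
    have hB4 : ∀ y, Vin y → Uout y → False := by
      rintro y ⟨c, hvc, hcC, hr1⟩ ⟨d, hr2, hdu⟩
      obtain ⟨m, h1, h2, h3, h4, h5, h6⟩ := hpathC hcC (hr1.trans hr2)
      have hndm : (u :: v :: m).Nodup := by
        refine List.nodup_cons.mpr ⟨?_, List.nodup_cons.mpr ⟨fun hv' => (h6 v hv').1.2 rfl, h2⟩⟩
        intro hu'
        rcases List.mem_cons.mp hu' with h | h
        · exact hne h
        · exact (h6 u h).1.1 rfl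
      have hlen := aux_cyc_len hcyc (u :: v :: m) [] u d hndm
        (by simp) (by simp)
        (List.isChain_cons_cons.mpr ⟨huv, List.isChain_cons.mpr ⟨fun y' hy' => by
            rw [h3] at hy'; simp only [Option.mem_def, Option.some.injEq] at hy'
            subst hy'; exact hvc,
          h5⟩⟩)
        rfl
        (by
          rw [aux_getLast?_cons (show v :: m ≠ [] by simp), aux_getLast?_cons h1]
          exact h4)
        (aux_chain2 hdu)
      simp only [List.length_cons, List.length_nil] at hlen
      have hm1 : m.length = 1 := by omega
      obtain ⟨c₀, rfl⟩ := List.length_eq_one_iff.mp hm1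
      simp only [List.head?_cons, Option.some.injEq] at h3
      simp only [List.getLast?_singleton, Option.some.injEq] at h4
      subst h3
      subst h4
      exact (h6 c₀ (by simp)).2 (hexa c₀ hvc hdu)
    have hB1 : ∀ y, Relation.ReflTransGen G u y → y ∈ C → Uin y ∨ Vin y := by
      intro y h
      induction h with
      | refl => exact fun hu' => absurd rfl hu'.1.1
      | @tail b c _ hstep ih =>
        intro hcC
        by_cases hbu : b = u
        · exact Or.inl ⟨c, hbu ▸ hstep, hcC, .refl⟩
        by_cases hbv : b = v
        · exact Or.inr ⟨c, hbv ▸ hstep, hcC, .refl⟩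
        by_cases hbB : b ∈ B
        · exact absurd (hBcl b hbB c ⟨hcC.1.1, hcC.1.2⟩
            ⟨hGne hstep, Or.inl hstep⟩) hcC.2
        have hbC : b ∈ C := ⟨⟨hbu, hbv⟩, hbB⟩
        rcases ih hbC with ⟨c', h1, h2, h3⟩ | ⟨c', h1, h2, h3⟩
        · exact Or.inl ⟨c', h1, h2, h3.tail ⟨hstep, hbC, hcC⟩⟩
        · exact Or.inr ⟨c', h1, h2, h3.tail ⟨hstep, hbC, hcC⟩⟩
    have hB2 : ∀ y, Relation.ReflTransGen G y u → y ∈ C → Uout y ∨ Vout y := by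
      intro y h
      induction h using Relation.ReflTransGen.head_induction_on with
      | refl => exact fun hu' => absurd rfl hu'.1.1
      | @head b c hstep _ ih =>
        intro hbC
        by_cases hcu : c = u
        · exact Or.inl ⟨b, .refl, hcu ▸ hstep⟩
        by_cases hcv : c = v
        · exact Or.inr ⟨b, .refl, hcv ▸ hstep⟩
        by_cases hcB : c ∈ B
        · exact absurd (hBcl c hcB b ⟨hbC.1.1, hbC.1.2⟩
            ⟨(hGne hstep).symm, Or.inr hstep⟩) hbC.2
        have hcC : c ∈ C := ⟨⟨hcu, hcv⟩, hcB⟩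
        rcases ih hcC with ⟨d, h1, h2⟩ | ⟨d, h1, h2⟩
        · exact Or.inl ⟨d, Relation.ReflTransGen.head ⟨hstep, hbC, hcC⟩ h1, h2⟩
        · exact Or.inr ⟨d, Relation.ReflTransGen.head ⟨hstep, hbC, hcC⟩ h1, h2⟩
    have hUVin : ∀ y, y ∈ C → Uin y → Vin y → False := fun y hy h1 h2 =>
      (hB2 y (hsc y u) hy).elim (fun ho => hB4 y h2 ho) (fun ho => hB3 y h1 ho)
    have hy₀C : y₀ ∈ C := ⟨hy₀s, hy₀B⟩
    rcases hB1 y₀ (hsc u y₀) hy₀C with hy₀U | hy₀V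
    · -- u-type: contradict connectivity of G⁻ - u
      have hreach := (hunb.2.2 u).preconnected ⟨y₀, hy₀s.1⟩ ⟨v, Ne.symm hne⟩
      have hres := aux_reach_closed (K := (underlying G).induce {w : V | w ≠ u})
        (P := fun z => z.1 ∈ C ∧ Uin z.1) ?_ hreach ⟨hy₀C, hy₀U⟩
      · exact hres.1.1.2 rfl
      rintro a' b' hadj ⟨haC, haU⟩
      have hadj' : (underlying G).Adj a'.1 b'.1 := hadj
      have hbu : b'.1 ≠ u := b'.2
      by_cases hbv : b'.1 = v
      · exfalso
        rcases hadj'.2 with h | h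
        · exact hB3 a'.1 haU ⟨a'.1, .refl, hbv ▸ h⟩
        · exact hUVin a'.1 haC haU ⟨a'.1, hbv ▸ h, haC, .refl⟩
      by_cases hbB : b'.1 ∈ B
      · exact absurd (hBcl b'.1 hbB a'.1 ⟨haC.1.1, haC.1.2⟩ hadj'.symm) haC.2
      have hbC : b'.1 ∈ C := ⟨⟨hbu, hbv⟩, hbB⟩
      refine ⟨hbC, ?_⟩
      rcases hadj'.2 with h | h
      · obtain ⟨c, h1, h2, h3⟩ := haU
        exact ⟨c, h1, h2, h3.tail ⟨h, haC, hbC⟩⟩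
      · have haUout : Uout a'.1 :=
          (hB2 a'.1 (hsc a'.1 u) haC).resolve_right (fun ho => hB3 a'.1 haU ho)
        have hbUout : Uout b'.1 := by
          obtain ⟨d, hr, hd⟩ := haUout
          exact ⟨d, Relation.ReflTransGen.head ⟨h, hbC, haC⟩ hr, hd⟩
        exact (hB1 b'.1 (hsc u b'.1) hbC).resolve_right (fun hv' => hB4 b'.1 hv' hbUout)
    · -- v-type: contradict connectivity of G⁻ - v
      have hreach := (hunb.2.2 v).preconnected ⟨y₀, hy₀s.2⟩ ⟨u, hne⟩
      have hres := aux_reach_closed (K := (underlying G).induce {w : V | w ≠ v})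
        (P := fun z => z.1 ∈ C ∧ Vin z.1) ?_ hreach ⟨hy₀C, hy₀V⟩
      · exact hres.1.1.1 rfl
      rintro a' b' hadj ⟨haC, haV⟩
      have hadj' : (underlying G).Adj a'.1 b'.1 := hadj
      have hbv : b'.1 ≠ v := b'.2
      by_cases hbu : b'.1 = u
      · exfalso
        rcases hadj'.2 with h | h
        · exact hB4 a'.1 haV ⟨a'.1, .refl, hbu ▸ h⟩
        · exact hUVin a'.1 haC ⟨a'.1, hbu ▸ h, haC, .refl⟩ haV
      by_cases hbB : b'.1 ∈ B
      · exact absurd (hBcl b'.1 hbB a'.1 ⟨haC.1.1, haC.1.2⟩ hadj'.symm) haC.2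
      have hbC : b'.1 ∈ C := ⟨⟨hbu, hbv⟩, hbB⟩
      refine ⟨hbC, ?_⟩
      rcases hadj'.2 with h | h
      · obtain ⟨c, h1, h2, h3⟩ := haV
        exact ⟨c, h1, h2, h3.tail ⟨h, haC, hbC⟩⟩
      · have haVout : Vout a'.1 :=
          (hB2 a'.1 (hsc a'.1 u) haC).resolve_left (fun ho => hB4 a'.1 haV ho)
        have hbVout : Vout b'.1 := by
          obtain ⟨d, hr, hd⟩ := haVout
          exact ⟨d, Relation.ReflTransGen.head ⟨h, hbC, haC⟩ hr, hd⟩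
        exact (hB1 b'.1 (hsc u b'.1) hbC).resolve_left (fun hu' => hB3 b'.1 hu' hbVout)
end

section
/- If a finite digraph G is weightable, then it admits an integer-valued weighting. -/
namespace IntW

variable {V : Type*} {G : V → V → Prop} {w : V → V → ℝ}

/-! ### List helpers -/

lemma zip_trunc : ∀ (l m l' : List V), m.length ≤ l.length → (l ++ l').zip m = l.zip m := by
  intro l
  induction l with
  | nil =>
    intro m l' h
    cases m with
    | nil => simp
    | cons b s => simp at h
  | cons a t IH =>
    intro m l' h
    cases m with
    | nil => simp
    | cons b s =>
      rw [List.cons_append, List.zip_cons_cons, List.zip_cons_cons]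
      rw [IH s l' (by simpa using h)]

lemma zip_mem_ext : ∀ (l m : List V) (m' : List V) (pr : V × V),
    pr ∈ l.zip m → pr ∈ l.zip (m ++ m') := by
  intro l
  induction l with
  | nil => simp
  | cons a t IH =>
    intro m m' pr hpr
    cases m with
    | nil => simp at hpr
    | cons b s =>
      rw [List.cons_append, List.zip_cons_cons]
      rw [List.zip_cons_cons] at hpr
      rcases List.mem_cons.mp hpr with h | h
      · exact List.mem_cons.mpr (Or.inl h)
      · exact List.mem_cons.mpr (Or.inr (IH s m' pr h))

lemma rotate_one_eq (l : List V) (h : l ≠ []) : l.rotate 1 = l.tail ++ [l.head h] := by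
  cases l with
  | nil => simp at h
  | cons a t => simp [List.rotate_cons_succ]

lemma mem_zip_last : ∀ (l : List V) (h : l ≠ []) (a : V),
    (l.getLast h, a) ∈ l.zip (l.tail ++ [a]) := by
  intro l
  induction l with
  | nil => simp
  | cons x t IH =>
    intro _ a
    cases t with
    | nil => simp
    | cons y s =>
      rw [List.tail_cons, List.cons_append, List.zip_cons_cons]
      refine List.mem_cons.mpr (Or.inr ?_)
      have := IH (by simp : (y :: s) ≠ []) a
      rw [List.tail_cons] at this
      simpa [List.getLast_cons] using this

lemma chain'_zip : ∀ (l : List V), l.Chain' G → ∀ pr ∈ l.zip l.tail, G pr.1 pr.2 := by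
  intro l
  induction l with
  | nil => simp
  | cons a t IH =>
    intro hc pr hpr
    cases t with
    | nil => simp at hpr
    | cons b s =>
      rw [List.Chain', List.isChain_cons_cons] at hc
      simp only [List.tail_cons, List.zip_cons_cons, List.mem_cons] at hpr
      rcases hpr with rfl | hpr
      · exact hc.1
      · exact IH hc.2 pr hpr

lemma chain'_of_zip : ∀ (l : List V), (∀ pr ∈ l.zip l.tail, G pr.1 pr.2) → l.Chain' G := by
  intro l
  induction l with
  | nil => exact fun _ => List.isChain_nil
  | cons a t IH =>
    intro hG
    cases t with
    | nil => exact List.isChain_singleton _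
    | cons b s =>
      rw [List.Chain', List.isChain_cons_cons]
      refine ⟨hG (a, b) (by simp), IH ?_⟩
      intro pr hpr
      exact hG pr (by simp only [List.tail_cons, List.zip_cons_cons, List.mem_cons]; exact Or.inr hpr)

lemma chain'_head_reach : ∀ (l : List V) (h : l ≠ []), l.Chain' G → ∀ a ∈ l,
    Relation.ReflTransGen G (l.head h) a := by
  intro l
  induction l with
  | nil => simp
  | cons x t IH =>
    intro _ hc a ha
    rcases List.mem_cons.mp ha with rfl | ha
    · exact .refl
    · cases t with
      | nil => simp at ha
      | cons y s =>
        rw [List.Chain', List.isChain_cons_cons] at hc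
        exact .head hc.1 (IH (by simp) hc.2 a ha)

lemma chain'_reach_last : ∀ (l : List V) (h : l ≠ []), l.Chain' G → ∀ a ∈ l,
    Relation.ReflTransGen G a (l.getLast h) := by
  intro l
  induction l with
  | nil => simp
  | cons x t IH =>
    intro _ hc a ha
    cases t with
    | nil =>
      simp only [List.mem_singleton] at ha
      subst ha; exact .refl
    | cons y s =>
      rw [List.Chain', List.isChain_cons_cons] at hc
      rw [List.getLast_cons (by simp : (y :: s) ≠ [])]
      rcases List.mem_cons.mp ha with rfl | ha
      · exact .head hc.1 (IH (by simp) hc.2 y (by simp))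
      · exact IH (by simp) hc.2 a ha

lemma sum_map_add (L : List (V × V)) (f g : V × V → ℝ) :
    (L.map fun p => f p + g p).sum = (L.map f).sum + (L.map g).sum := by
  induction L with
  | nil => simp
  | cons p t IH => simp [IH]; ring

lemma sum_map_sub (L : List (V × V)) (f g : V × V → ℝ) :
    (L.map fun p => f p - g p).sum = (L.map f).sum - (L.map g).sum := by
  induction L with
  | nil => simp
  | cons p t IH => simp [IH]; ring

/-! ### Directed walks -/

inductive DW (G : V → V → Prop) : V → V → Type _
  | nil (u : V) : DW G u u
  | cons {u v x : V} (h : G u v) (p : DW G v x) : DW G u x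

namespace DW

def wt (w : V → V → ℝ) : ∀ {u v : V}, DW G u v → ℝ
  | _, _, nil _ => 0
  | _, _, cons (u := a) (v := b) _ p => w a b + wt w p

def len : ∀ {u v : V}, DW G u v → ℕ
  | _, _, nil _ => 0
  | _, _, cons _ p => len p + 1

def supp : ∀ {u v : V}, DW G u v → List V
  | _, _, nil u => [u]
  | _, _, cons (u := a) _ p => a :: supp p

def append : ∀ {u v x : V}, DW G u v → DW G v x → DW G u x
  | _, _, _, nil _, q => q
  | _, _, _, cons h p, q => cons h (p.append q)

@[simp] lemma wt_nil (u : V) : (nil u : DW G u u).wt w = 0 := rfl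
@[simp] lemma wt_cons {u v x : V} (h : G u v) (p : DW G v x) :
    (cons h p).wt w = w u v + p.wt w := rfl
@[simp] lemma len_nil (u : V) : (nil u : DW G u u).len = 0 := rfl
@[simp] lemma len_cons {u v x : V} (h : G u v) (p : DW G v x) :
    (cons h p).len = p.len + 1 := rfl
@[simp] lemma supp_nil (u : V) : (nil u : DW G u u).supp = [u] := rfl
@[simp] lemma supp_cons {u v x : V} (h : G u v) (p : DW G v x) :
    (cons h p).supp = u :: p.supp := rfl
@[simp] lemma nil_append {u v : V} (q : DW G u v) : (nil u).append q = q := rfl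
@[simp] lemma cons_append {u v x y : V} (h : G u v) (p : DW G v x) (q : DW G x y) :
    (cons h p).append q = cons h (p.append q) := rfl

lemma supp_ne_nil {u v : V} (p : DW G u v) : p.supp ≠ [] := by
  cases p <;> simp

lemma supp_head : ∀ {u v : V} (p : DW G u v), ∃ t, p.supp = u :: t := by
  intro u v p
  cases p with
  | nil => exact ⟨[], rfl⟩
  | cons h q => exact ⟨q.supp, rfl⟩

lemma supp_length {u v : V} (p : DW G u v) : p.supp.length = p.len + 1 := by
  induction p with
  | nil => simp
  | cons h q IH => simp [IH]

lemma supp_getLast : ∀ {u v : V} (p : DW G u v), p.supp.getLast p.supp_ne_nil = v := by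
  intro u v p
  induction p with
  | nil => simp
  | cons h q IH =>
    exact (List.getLast_cons q.supp_ne_nil).trans IH

lemma chain'_supp {u v : V} (p : DW G u v) : p.supp.Chain' G := by
  induction p with
  | nil => exact List.isChain_singleton _
  | cons h q IH =>
    obtain ⟨t, ht⟩ := q.supp_head
    rw [supp_cons, ht, List.Chain', List.isChain_cons_cons]
    exact ⟨h, ht ▸ IH⟩

lemma wt_append {u v x : V} (p : DW G u v) (q : DW G v x) :
    (p.append q).wt w = p.wt w + q.wt w := by
  induction p with
  | nil => simp
  | cons h r IH => simp [IH]; ring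

lemma len_append {u v x : V} (p : DW G u v) (q : DW G v x) :
    (p.append q).len = p.len + q.len := by
  induction p with
  | nil => simp
  | cons h r IH => simp [IH]; omega

lemma wt_eq_sum {u v : V} (p : DW G u v) :
    p.wt w = ((p.supp.zip p.supp.tail).map fun pr => w pr.1 pr.2).sum := by
  induction p with
  | nil => simp
  | cons h q IH =>
    obtain ⟨t, ht⟩ := q.supp_head
    rw [wt_cons, supp_cons, ht, List.tail_cons, List.zip_cons_cons, List.map_cons,
      List.sum_cons, ← ht, IH, ht, List.tail_cons]

lemma eq_of_len_zero : ∀ {u v : V} (p : DW G u v), p.len = 0 → u = v := by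
  intro u v p h
  cases p with
  | nil => rfl
  | cons _ _ => simp at h

lemma supp_of_len_zero : ∀ {u v : V} (p : DW G u v), p.len = 0 → p.supp = [u] := by
  intro u v p h
  cases p with
  | nil => rfl
  | cons _ _ => simp at h

lemma exists_split {u v : V} (p : DW G u v) (y : V) (hy : y ∈ p.supp) :
    ∃ (p1 : DW G u y) (p2 : DW G y v),
      p.wt w = p1.wt w + p2.wt w ∧ p.len = p1.len + p2.len ∧
      p.supp = p1.supp.dropLast ++ p2.supp ∧ y ∉ p1.supp.dropLast := by
  induction p with
  | nil u =>
    have : y = u := by simpa using hy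
    subst this
    exact ⟨nil y, nil y, by simp, by simp, by simp, by simp⟩
  | cons h q IH =>
    rename_i a b c
    by_cases hyu : y = a
    · subst hyu
      exact ⟨nil y, cons h q, by simp, by simp, by simp, by simp⟩
    · have hyq : y ∈ q.supp := by
        rcases List.mem_cons.mp (by simpa using hy) with h' | h'
        · exact absurd h' hyu
        · exact h'
      obtain ⟨q1, q2, hw1, hl1, hs1, hn1⟩ := IH hyq
      refine ⟨cons h q1, q2, by simp [hw1]; ring, by simp [hl1]; ring, ?_, ?_⟩
      · rw [supp_cons, supp_cons, List.dropLast_cons_of_ne_nil q1.supp_ne_nil,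
          List.cons_append, hs1]
      · rw [supp_cons, List.dropLast_cons_of_ne_nil q1.supp_ne_nil]
        simp only [List.mem_cons, not_or]
        exact ⟨hyu, hn1⟩

end DW

open Cyclic3

lemma closed_wt_dicycle (hw : IsWeighting G w) {u : V} (p : DW G u u)
    (h1 : 1 ≤ p.len) (hnd : p.supp.dropLast.Nodup) : p.wt w = 1 := by
  obtain ⟨c, hsupp, hclen⟩ : ∃ c : List V, p.supp = c ++ [u] ∧ c.length = p.len := by
    refine ⟨p.supp.dropLast, ?_, ?_⟩
    · conv_lhs => rw [← List.dropLast_append_getLast p.supp_ne_nil]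
      rw [p.supp_getLast]
    · rw [List.length_dropLast, p.supp_length]
      omega
  have hnd' : c.Nodup := by
    rw [hsupp, List.dropLast_concat] at hnd
    exact hnd
  have hc : c ≠ [] := by
    intro h0
    rw [h0] at hclen
    simp at hclen
    omega
  have hhead : c.head hc = u := by
    obtain ⟨t, ht⟩ := p.supp_head
    cases c with
    | nil => exact (hc rfl).elim
    | cons a s =>
      have : a :: (s ++ [u]) = u :: t := by
        rw [← List.cons_append, ← hsupp, ht]
      exact (List.cons.injEq _ _ _ _ ▸ this).1
  have htail : p.supp.tail = c.tail ++ [u] := by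
    cases c with
    | nil => exact (hc rfl).elim
    | cons a s => rw [hsupp]; simp
  have hzip : p.supp.zip p.supp.tail = c.zip (c.rotate 1) := by
    rw [htail, hsupp, zip_trunc c (c.tail ++ [u]) [u]
      (by cases c with
          | nil => exact (hc rfl).elim
          | cons a s => simp),
      rotate_one_eq c hc, hhead]
  have hdic : IsDicycle G c := by
    refine ⟨hc, hnd', ?_⟩
    intro pr hpr
    apply chain'_zip p.supp p.chain'_supp
    rw [hzip]
    exact hpr
  rw [p.wt_eq_sum, hzip]
  exact hw c hdic

lemma closed_int (hw : IsWeighting G w) :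
    ∀ (n : ℕ) (u : V) (p : DW G u u), p.len = n → ∃ k : ℤ, p.wt w = (k : ℝ) := by
  classical
  intro n
  induction n using Nat.strong_induction_on with
  | _ n IH =>
  intro u p hlen
  cases p with
  | nil => exact ⟨0, by simp⟩
  | cons h q =>
    rename_i v
    by_cases hnd : ((DW.cons h q).supp.dropLast).Nodup
    · exact ⟨1, by rw [closed_wt_dicycle hw _ (by simp) hnd]; simp⟩
    obtain ⟨x, hx2⟩ : ∃ x, 2 ≤ ((DW.cons h q).supp.dropLast).count x := by
      by_contra hcon
      push_neg at hcon
      exact hnd (List.nodup_iff_count_le_one.mpr fun a => by have := hcon a; omega)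
    have hqsupp_ne := q.supp_ne_nil
    have hdrop : (DW.cons h q).supp.dropLast = u :: q.supp.dropLast := by
      rw [DW.supp_cons, List.dropLast_cons_of_ne_nil hqsupp_ne]
    rw [hdrop] at hx2
    by_cases hxu : x = u
    · subst hxu
      have hmem : x ∈ q.supp.dropLast := by
        rw [List.count_cons_self] at hx2
        exact List.count_pos_iff.mp (by omega)
      obtain ⟨q1, q2, hw1, hl1, hs1, hn1⟩ := q.exists_split (w := w) x
        ((List.dropLast_sublist q.supp).subset hmem)
      have hq2 : 1 ≤ q2.len := by
        by_contra h0
        push_neg at h0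
        have h0' : q2.len = 0 := by omega
        have hss := q2.supp_of_len_zero h0'
        rw [hss] at hs1
        have : q.supp.dropLast = q1.supp.dropLast := by rw [hs1, List.dropLast_concat]
        rw [this] at hmem
        exact hn1 hmem
      have hlen' : q1.len + q2.len + 1 = n := by
        rw [DW.len_cons, hl1] at hlen
        omega
      obtain ⟨k1, hk1⟩ := IH (q1.len + 1) (by omega) x (DW.cons h q1) rfl
      obtain ⟨k2, hk2⟩ := IH q2.len (by omega) x q2 rfl
      refine ⟨k1 + k2, ?_⟩
      rw [DW.wt_cons, hw1]
      rw [DW.wt_cons] at hk1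
      push_cast
      linarith
    · have hx2' : 2 ≤ q.supp.dropLast.count x := by
        rw [List.count_cons_of_ne (Ne.symm hxu)] at hx2
        exact hx2
      have hmem : x ∈ q.supp.dropLast := List.count_pos_iff.mp (by omega)
      obtain ⟨q1, q2, hw1, hl1, hs1, hn1⟩ := q.exists_split (w := w) x
        ((List.dropLast_sublist q.supp).subset hmem)
      have hq2supp_ne := q2.supp_ne_nil
      have hdrop2 : q.supp.dropLast = q1.supp.dropLast ++ q2.supp.dropLast := by
        rw [hs1, List.dropLast_append_of_ne_nil hq2supp_ne]
      have hcount0 : q1.supp.dropLast.count x = 0 := List.count_eq_zero.mpr hn1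
      have hx2'' : 2 ≤ q2.supp.dropLast.count x := by
        rw [hdrop2, List.count_append, hcount0] at hx2'
        omega
      cases q2 with
      | nil => exact absurd rfl hxu
      | cons h2 q3 =>
        rename_i y
        have hq3supp_ne := q3.supp_ne_nil
        have hd : (DW.cons h2 q3).supp.dropLast = x :: q3.supp.dropLast := by
          rw [DW.supp_cons, List.dropLast_cons_of_ne_nil hq3supp_ne]
        rw [hd, List.count_cons_self] at hx2''
        have hmem3 : x ∈ q3.supp.dropLast := List.count_pos_iff.mp (by omega)
        obtain ⟨r1, r2, hw2, hl2, hs2, hn2⟩ := q3.exists_split (w := w) x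
          ((List.dropLast_sublist q3.supp).subset hmem3)
        have hr2 : 1 ≤ r2.len := by
          by_contra h0
          push_neg at h0
          exact hxu (DW.eq_of_len_zero r2 (by omega))
        have hlq2 : (DW.cons h2 q3).len = r1.len + r2.len + 1 := by
          rw [DW.len_cons, hl2]
        obtain ⟨k1, hk1⟩ := IH (r1.len + 1) (by
          rw [DW.len_cons, hl1, hlq2] at hlen
          omega) x (DW.cons h2 r1) rfl
        obtain ⟨k2, hk2⟩ := IH (q1.len + r2.len + 1) (by
          rw [DW.len_cons, hl1, hlq2] at hlen
          omega) u (DW.cons h (q1.append r2)) (by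
          rw [DW.len_cons, DW.len_append])
        refine ⟨k1 + k2, ?_⟩
        rw [DW.wt_cons, hw1, DW.wt_cons, hw2]
        rw [DW.wt_cons] at hk1
        rw [DW.wt_cons, DW.wt_append] at hk2
        push_cast
        linarith

lemma closed_int' (hw : IsWeighting G w) {u : V} (p : DW G u u) :
    ∃ k : ℤ, p.wt w = (k : ℝ) :=
  closed_int hw p.len u p rfl

lemma walk_of_reach {u v : V} (h : Relation.ReflTransGen G u v) : Nonempty (DW G u v) := by
  induction h with
  | refl => exact ⟨.nil u⟩
  | tail _ hbc IH => exact ⟨IH.some.append (.cons hbc (.nil _))⟩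

lemma diff_int (hw : IsWeighting G w) {a b : V} (p q : DW G a b)
    (hr : Relation.ReflTransGen G b a) : ∃ k : ℤ, p.wt w - q.wt w = (k : ℝ) := by
  obtain ⟨r⟩ := walk_of_reach hr
  obtain ⟨k1, hk1⟩ := closed_int' hw (p.append r)
  obtain ⟨k2, hk2⟩ := closed_int' hw (q.append r)
  rw [DW.wt_append] at hk1 hk2
  exact ⟨k1 - k2, by push_cast; linarith⟩

lemma cyc_reach {l : List V} (hl : IsDicycle G l) :
    ∀ a ∈ l, ∀ b ∈ l, Relation.ReflTransGen G a b := by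
  obtain ⟨hne, hnd, hG⟩ := hl
  have hrot := rotate_one_eq l hne
  have hchain : l.Chain' G := by
    apply chain'_of_zip
    intro pr hpr
    exact hG pr (by rw [hrot]; exact zip_mem_ext l l.tail [l.head hne] pr hpr)
  have hlast : G (l.getLast hne) (l.head hne) :=
    hG _ (by rw [hrot]; exact mem_zip_last l hne (l.head hne))
  intro a ha b hb
  exact (chain'_reach_last l hne hchain a ha).trans
    ((Relation.ReflTransGen.single hlast).trans (chain'_head_reach l hne hchain b hb))

def sccSetoid (G : V → V → Prop) : Setoid V :=
  ⟨fun a b => Relation.ReflTransGen G a b ∧ Relation.ReflTransGen G b a,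
   ⟨fun _ => ⟨.refl, .refl⟩, fun h => ⟨h.2, h.1⟩,
    fun h1 h2 => ⟨h1.1.trans h2.1, h2.2.trans h1.2⟩⟩⟩

noncomputable def sccRep (G : V → V → Prop) (v : V) : V :=
  (Quotient.mk (sccSetoid G) v).out

lemma sccRep_rel (G : V → V → Prop) (v : V) :
    Relation.ReflTransGen G (sccRep G v) v ∧ Relation.ReflTransGen G v (sccRep G v) :=
  @Quotient.mk_out V (sccSetoid G) v

lemma sccRep_eq (G : V → V → Prop) {u v : V}
    (h : Relation.ReflTransGen G u v ∧ Relation.ReflTransGen G v u) :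
    sccRep G u = sccRep G v :=
  congrArg Quotient.out (@Quotient.sound V (sccSetoid G) u v h)

noncomputable def psi (G : V → V → Prop) (w : V → V → ℝ) (v : V) : ℝ :=
  Int.fract ((Classical.choice (walk_of_reach (sccRep_rel G v).1)).wt w)

lemma psi_spec (G : V → V → Prop) (w : V → V → ℝ) (v : V) :
    ∃ p : DW G (sccRep G v) v, psi G w v = Int.fract (p.wt w) :=
  ⟨_, rfl⟩

lemma diff_int' (hw : IsWeighting G w) {a b c : V} (p : DW G a b) (q : DW G a c)
    (h : G b c) (hr : Relation.ReflTransGen G c a) :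
    ∃ k : ℤ, (w b c + p.wt w) - q.wt w = (k : ℝ) := by
  obtain ⟨k, hk⟩ := diff_int hw (p.append (DW.cons h (DW.nil c))) q hr
  rw [DW.wt_append, DW.wt_cons, DW.wt_nil] at hk
  exact ⟨k, by linarith⟩

lemma psi_diff (hw : IsWeighting G w) {x y : V} (hxy : G x y)
    (hyx : Relation.ReflTransGen G y x) :
    ∃ k : ℤ, w x y + psi G w x - psi G w y = (k : ℝ) := by
  obtain ⟨P, hP⟩ := psi_spec G w x
  obtain ⟨Q, hQ⟩ := psi_spec G w y
  have hrep : sccRep G x = sccRep G y :=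
    sccRep_eq G ⟨Relation.ReflTransGen.single hxy, hyx⟩
  rw [hP, hQ]
  clear hP hQ
  revert P Q
  rw [hrep]
  intro P Q
  obtain ⟨k, hk⟩ := diff_int' hw P Q hxy (sccRep_rel G y).2
  refine ⟨k - ⌊P.wt w⌋ + ⌊Q.wt w⌋, ?_⟩
  rw [← Int.self_sub_floor (P.wt w), ← Int.self_sub_floor (Q.wt w)]
  push_cast
  linarith

end IntW

open Cyclic3 in
/-- If a finite digraph is weightable, then it admits an integer-valued weighting. -/
theorem stmt_17 {V : Type*} [Fintype V] (G : V → V → Prop) (hirr : Irreflexive G)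
    (h : ∃ w : V → V → ℝ, IsWeighting G w) :
    ∃ w : V → V → ℝ, IsWeighting G w ∧ ∀ x y, G x y → ∃ k : ℤ, w x y = (k : ℝ) := by
  classical
  obtain ⟨w, hw⟩ := h
  refine ⟨fun a b => if Relation.ReflTransGen G a b ∧ Relation.ReflTransGen G b a
      then w a b + IntW.psi G w a - IntW.psi G w b else 0, ?_, ?_⟩
  · intro l hl
    have hS : ∀ pr ∈ l.zip (l.rotate 1),
        Relation.ReflTransGen G pr.1 pr.2 ∧ Relation.ReflTransGen G pr.2 pr.1 := by
      intro pr hpr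
      have h1 : pr.1 ∈ l := by
        have hfst := List.map_fst_zip (le_of_eq (List.length_rotate l 1).symm)
        rw [← hfst]
        exact List.mem_map_of_mem hpr
      have h2 : pr.2 ∈ l := by
        have hsnd := List.map_snd_zip (le_of_eq (List.length_rotate l 1))
        rw [← List.mem_rotate (n := 1), ← hsnd]
        exact List.mem_map_of_mem hpr
      exact ⟨IntW.cyc_reach hl pr.1 h1 pr.2 h2, IntW.cyc_reach hl pr.2 h2 pr.1 h1⟩
    rw [List.map_congr_left
      (g := fun pr : V × V => w pr.1 pr.2 + IntW.psi G w pr.1 - IntW.psi G w pr.2)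
      (fun pr hpr => if_pos (hS pr hpr))]
    rw [IntW.sum_map_sub _ (fun pr => w pr.1 pr.2 + IntW.psi G w pr.1)
      (fun pr => IntW.psi G w pr.2)]
    rw [IntW.sum_map_add _ (fun pr : V × V => w pr.1 pr.2) (fun pr => IntW.psi G w pr.1)]
    have e1 := congrArg (List.map (IntW.psi G w))
      (List.map_fst_zip (le_of_eq (List.length_rotate l 1).symm))
    rw [List.map_map] at e1
    have e2 := congrArg (List.map (IntW.psi G w))
      (List.map_snd_zip (le_of_eq (List.length_rotate l 1)))
    rw [List.map_map] at e2
    simp only [Function.comp_def] at e1 e2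
    have e3 : ((l.rotate 1).map (IntW.psi G w)).sum = (l.map (IntW.psi G w)).sum :=
      ((l.rotate_perm 1).map _).sum_eq
    rw [e1, e2, e3, hw l hl]
    ring
  · intro x y hxy
    by_cases hS : Relation.ReflTransGen G x y ∧ Relation.ReflTransGen G y x
    · obtain ⟨k, hk⟩ := IntW.psi_diff hw hxy hS.2
      refine ⟨k, ?_⟩
      show (if Relation.ReflTransGen G x y ∧ Relation.ReflTransGen G y x
        then w x y + IntW.psi G w x - IntW.psi G w y else 0) = (k : ℝ)
      rw [if_pos hS]
      exact hk
    · refine ⟨0, ?_⟩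
      show (if Relation.ReflTransGen G x y ∧ Relation.ReflTransGen G y x
        then w x y + IntW.psi G w x - IntW.psi G w y else 0) = ((0 : ℤ) : ℝ)
      rw [if_neg hS]
      simp
end

section
/- If a finite digraph G is weightable, then it admits a weighting taking values only in {0,1}. -/
namespace ZeroOneAux

open List

variable {V : Type*}

/-- weight of a walk (list of vertices) -/
def Wt (w : V → V → ℝ) : List V → ℝ
  | [] => 0
  | [_] => 0
  | a :: b :: l => w a b + Wt w (b :: l)

@[simp] lemma Wt_nil (w : V → V → ℝ) : Wt w [] = 0 := rfl
@[simp] lemma Wt_single (w : V → V → ℝ) (a : V) : Wt w [a] = 0 := rfl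
@[simp] lemma Wt_cons₂ (w : V → V → ℝ) (a b : V) (l : List V) :
    Wt w (a :: b :: l) = w a b + Wt w (b :: l) := rfl

lemma Wt_split (w : V → V → ℝ) :
    ∀ (L₁ : List V) (x : V) (L₂ : List V),
      Wt w (L₁ ++ x :: L₂) = Wt w (L₁ ++ [x]) + Wt w (x :: L₂)
  | [], x, L₂ => by simp
  | [a], x, L₂ => by simp [Wt]
  | a :: b :: L₁, x, L₂ => by
    have h := Wt_split w (b :: L₁) x L₂
    simp only [cons_append, Wt_cons₂] at h ⊢
    rw [h]; ring

lemma Wt_append_single (w : V → V → ℝ) (L : List V) (u v : V)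
    (h : L.getLast? = some u) : Wt w (L ++ [v]) = Wt w L + w u v := by
  obtain ⟨L', rfl⟩ := List.getLast?_eq_some_iff.1 h
  have := Wt_split w L' u [v]
  simpa using this

lemma zip_snoc : ∀ (m : List V) (a b : V),
    (b :: m).zip (m ++ [a]) = (b :: (m ++ [a])).zip (m ++ [a])
  | [], a, b => by simp
  | c :: m', a, b => by
    simp only [cons_append, zip_cons_cons]
    congr 1
    exact zip_snoc m' a c

lemma rotate_one_cons (a : V) (m : List V) : (a :: m).rotate 1 = m ++ [a] := by
  simpa using List.rotate_cons_succ m a 0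

/-- chain' iff zip pairs -/
lemma chain'_iff_zip (G : V → V → Prop) :
    ∀ l : List V, l.Chain' G ↔ ∀ p ∈ l.zip l.tail, G p.1 p.2
  | [] => by simp [Chain']
  | [a] => by simp [Chain']
  | a :: b :: l => by
    have ih := chain'_iff_zip G (b :: l)
    simp only [Chain'] at ih ⊢
    rw [List.isChain_cons_cons, ih]
    simp [or_imp, forall_and]

lemma Wt_zip_eq (w : V → V → ℝ) :
    ∀ l : List V, ((l.zip l.tail).map fun p => w p.1 p.2).sum = Wt w l
  | [] => by simp
  | [a] => by simp
  | a :: b :: l => by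
    simp only [tail_cons, zip_cons_cons, map_cons, sum_cons, Wt_cons₂]
    rw [← Wt_zip_eq w (b :: l)]
    simp

/-- the cycle-sum in `IsWeighting`/`IsDicycle` as a `Wt`. -/
lemma cycSum_eq_Wt (w : V → V → ℝ) (a : V) (m : List V) :
    (((a :: m).zip ((a :: m).rotate 1)).map fun p => w p.1 p.2).sum
      = Wt w (a :: m ++ [a]) := by
  rw [rotate_one_cons, zip_snoc]
  have := Wt_zip_eq w (a :: (m ++ [a]))
  simpa using this

lemma cycChain_iff (G : V → V → Prop) (a : V) (m : List V) :
    (∀ p ∈ (a :: m).zip ((a :: m).rotate 1), G p.1 p.2) ↔ Chain' G (a :: m ++ [a]) := by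
  rw [rotate_one_cons, zip_snoc]
  have h := chain'_iff_zip G (a :: (m ++ [a]))
  simp only [List.tail_cons] at h
  rw [← h]
  simp


/-- decompose a non-nodup list -/
lemma exists_dup_split : ∀ (l : List V), ¬ l.Nodup →
    ∃ (x : V) (p q s : List V), l = p ++ x :: q ++ x :: s
  | [], h => absurd List.nodup_nil h
  | a :: l, h => by
    rw [List.nodup_cons] at h
    push_neg at h
    by_cases ha : a ∈ l
    · obtain ⟨q, s, rfl⟩ := List.append_of_mem ha
      exact ⟨a, [], q, s, by simp⟩
    · obtain ⟨x, p, q, s, rfl⟩ := exists_dup_split l (h ha)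
      exact ⟨x, a :: p, q, s, by simp⟩

lemma chain'_middle {G : V → V → Prop} {p q s : List V} {x : V}
    (h : Chain' G (p ++ x :: q ++ x :: s)) : Chain' G (x :: q ++ [x]) := by
  apply h.infix
  refine ⟨p, s, ?_⟩
  simp

lemma chain'_shortcut {G : V → V → Prop} {p q s : List V} {x : V}
    (h : Chain' G (p ++ x :: q ++ x :: s)) : Chain' G (p ++ x :: s) := by
  have h' : Chain' G ((p ++ [x]) ++ ((q ++ [x]) ++ s)) := by
    simpa [List.append_assoc] using h
  simp only [Chain'] at h'
  rw [List.isChain_append] at h'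
  obtain ⟨h1, h2, h3⟩ := h'
  rw [List.isChain_append] at h2
  obtain ⟨h4, h5, h6⟩ := h2
  have : Chain' G ((p ++ [x]) ++ s) := by
    simp only [Chain']
    rw [List.isChain_append]
    refine ⟨h1, h5, ?_⟩
    intro a ha b hb
    have hax : a = x := by
      rwa [List.getLast?_concat, Option.mem_some_iff, eq_comm] at ha
    subst hax
    exact h6 a (by rw [List.getLast?_concat]; rfl) b hb
  simpa [List.append_assoc] using this

lemma Wt_shortcut (w : V → V → ℝ) (p q s : List V) (x : V) :
    Wt w (p ++ x :: q ++ x :: s) = Wt w (p ++ x :: s) + Wt w (x :: q ++ [x]) := by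
  have h1 : Wt w (p ++ x :: (q ++ x :: s)) = Wt w (p ++ [x]) + Wt w (x :: q ++ x :: s) :=
    Wt_split w p x (q ++ x :: s)
  have h2 : Wt w ((x :: q) ++ x :: s) = Wt w ((x :: q) ++ [x]) + Wt w (x :: s) :=
    Wt_split w (x :: q) x s
  have h3 : Wt w (p ++ x :: s) = Wt w (p ++ [x]) + Wt w (x :: s) := Wt_split w p x s
  simp only [cons_append, append_assoc] at h1 h2 h3 ⊢
  rw [h1, h2, h3]
  ring


section Walks

variable (G : V → V → Prop) (w : V → V → ℝ)

/-- `l` is a walk from `u` to `v`. -/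
def Wk (u v : V) (l : List V) : Prop :=
  l.head? = some u ∧ l.getLast? = some v ∧ l.Chain' G

def Reach (u v : V) : Prop := ∃ l, Wk G u v l

variable {G w}

lemma reach_refl (v : V) : Reach G v v :=
  ⟨[v], rfl, rfl, List.isChain_singleton v⟩

lemma reach_of_edge {u v : V} (h : G u v) : Reach G u v :=
  ⟨[u, v], rfl, rfl, List.isChain_pair.2 h⟩

lemma wk_compose {u v x : V} {l₁ l₂ : List V} (h₁ : Wk G u v l₁) (h₂ : Wk G v x l₂) :
    ∃ l, Wk G u x l ∧ Wt w l = Wt w l₁ + Wt w l₂ := by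
  obtain ⟨hh₁, hl₁, hc₁⟩ := h₁
  obtain ⟨hh₂, hl₂, hc₂⟩ := h₂
  obtain ⟨t, rfl⟩ : ∃ t, l₂ = v :: t := by
    cases l₂ with
    | nil => simp at hh₂
    | cons a t =>
      simp only [List.head?_cons, Option.some.injEq] at hh₂
      exact ⟨t, by rw [hh₂]⟩
  cases t with
  | nil =>
    refine ⟨l₁, ⟨hh₁, ?_, hc₁⟩, by simp⟩
    simpa using hl₂ ▸ hl₁
  | cons b t' =>
    obtain ⟨L, rfl⟩ := List.getLast?_eq_some_iff.1 hl₁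
    refine ⟨L ++ v :: b :: t', ⟨?_, ?_, ?_⟩, ?_⟩
    · simpa using hh₁
    · rw [List.getLast?_append_of_ne_nil _ (by simp)]
      simpa using hl₂
    · have : Chain' G ((L ++ [v]) ++ b :: t') := by
        simp only [Chain']
        rw [List.isChain_append]
        refine ⟨hc₁, hc₂.tail, ?_⟩
        intro a ha c hc
        rw [List.getLast?_concat, Option.mem_some_iff] at ha
        simp only [List.head?_cons, Option.mem_some_iff] at hc
        subst ha; subst hc
        exact (List.isChain_cons_cons.1 hc₂).1
      simpa [List.append_assoc] using this
    · have := Wt_split w L v (b :: t')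
      rw [this]

lemma reach_trans {u v x : V} (h₁ : Reach G u v) (h₂ : Reach G v x) : Reach G u x := by
  obtain ⟨l₁, h₁⟩ := h₁
  obtain ⟨l₂, h₂⟩ := h₂
  obtain ⟨l, hl, -⟩ := wk_compose (w := fun _ _ => (0:ℝ)) h₁ h₂
  exact ⟨l, hl⟩

lemma wk_snoc {u v x : V} {l : List V} (h : Wk G u v l) (he : G v x) :
    Wk G u x (l ++ [x]) ∧ Wt w (l ++ [x]) = Wt w l + w v x := by
  obtain ⟨hh, hl, hc⟩ := h
  refine ⟨⟨by rw [List.head?_append, hh]; rfl, by simp, ?_⟩,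
    Wt_append_single w l v x hl⟩
  simp only [Chain']
  rw [List.isChain_append]
  refine ⟨hc, List.isChain_singleton x, ?_⟩
  intro a ha c hc'
  simp only [List.head?_cons, Option.mem_some_iff] at hc'
  rw [hl, Option.mem_some_iff] at ha
  subst ha; subst hc'
  exact he


variable (hone : ∀ (a : V) (m : List V), (a :: m).Nodup →
    Chain' G (a :: m ++ [a]) → Wt w (a :: m ++ [a]) = 1)

include hone

/-- every closed walk has weight `1 + k` for some natural `k`. -/
lemma closed_wt : ∀ (n : ℕ) (m : List V) (a : V), m.length ≤ n →
    Chain' G (a :: m ++ [a]) → ∃ k : ℕ, Wt w (a :: m ++ [a]) = 1 + k := by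
  intro n
  induction n with
  | zero =>
    intro m a hm hc
    interval_cases hl : m.length
    · rw [List.length_eq_zero_iff] at hl
      subst hl
      exact ⟨0, by rw [hone a [] (by simp) hc]; simp⟩
  | succ n ih =>
    intro m a hm hc
    by_cases hnd : (a :: m).Nodup
    · exact ⟨0, by rw [hone a m hnd hc]; simp⟩
    · obtain ⟨x, p, q, s, hsplit⟩ := exists_dup_split (a :: m) hnd
      have hwhole : a :: m ++ [a] = p ++ x :: q ++ x :: (s ++ [a]) := by
        rw [← List.cons_append, hsplit]
        simp [List.append_assoc]
      have hcm : Chain' G (x :: q ++ [x]) := by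
        rw [hwhole] at hc
        exact chain'_middle hc
      have hcs : Chain' G (p ++ x :: (s ++ [a])) := by
        rw [hwhole] at hc
        exact chain'_shortcut hc
      have hlen : p.length + q.length + s.length + 2 = m.length + 1 := by
        have := congrArg List.length hsplit
        simp at this
        omega
      -- inner closed walk
      obtain ⟨k₁, hk₁⟩ := ih q x (by omega) (by simpa using hcm)
      -- outer closed walk
      have houter : ∃ (m' : List V), p ++ x :: (s ++ [a]) = a :: m' ++ [a] ∧
          m'.length + 1 = p.length + s.length + 1 := by
        cases p with
        | nil =>
          have hax : a = x := by
            have := congrArg List.head? hsplit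
            simpa using this
          exact ⟨s, by simp [hax], by simp⟩
        | cons b p' =>
          have hab : b = a := by
            have := congrArg List.head? hsplit
            simpa using this.symm
          subst hab
          exact ⟨p' ++ x :: s, by simp [List.append_assoc], by simp; omega⟩
      obtain ⟨m', hm', hm'len⟩ := houter
      obtain ⟨k₂, hk₂⟩ := ih m' a (by omega) (by rw [← hm']; exact hcs)
      refine ⟨k₁ + k₂ + 1, ?_⟩
      have hW : Wt w (a :: m ++ [a]) = Wt w (p ++ x :: (s ++ [a])) + Wt w (x :: q ++ [x]) := by
        rw [hwhole]
        exact Wt_shortcut w p q (s ++ [a]) x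
      rw [hW, hm', hk₁, hk₂]
      push_cast
      ring

/-- closed walks have integer weight. -/
lemma closed_int {a : V} {l : List V} (hh : l.head? = some a) (hl : l.getLast? = some a)
    (hc : Chain' G l) : ∃ k : ℤ, Wt w l = k := by
  cases l with
  | nil => simp at hh
  | cons b t =>
    simp only [List.head?_cons, Option.some.injEq] at hh
    subst hh
    cases t with
    | nil => exact ⟨0, by simp⟩
    | cons c t' =>
      have hlast : (c :: t').getLast? = some b := by
        rw [← hl]; rfl
      obtain ⟨m, hm⟩ := List.getLast?_eq_some_iff.1 hlast
      have hc' : Chain' G (b :: m ++ [b]) := by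
        rw [List.cons_append, ← hm]
        exact hc
      obtain ⟨k, hk⟩ := closed_wt hone m.length m b (le_refl _) hc'
      refine ⟨1 + k, ?_⟩
      have : Wt w (b :: c :: t') = Wt w (b :: m ++ [b]) := by
        rw [List.cons_append, ← hm]
      rw [this, hk]
      push_cast
      ring

/-- reduce a walk to a nodup walk of no larger weight. -/
lemma exists_nodup_wk : ∀ (n : ℕ) (l : List V) {u v : V}, l.length ≤ n → Wk G u v l →
    ∃ l', Wk G u v l' ∧ l'.Nodup ∧ Wt w l' ≤ Wt w l := by
  intro n
  induction n with
  | zero => intro l u v hn h; obtain ⟨hh, -, -⟩ := h; interval_cases hl : l.length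
            · rw [List.length_eq_zero_iff] at hl; subst hl; simp at hh
  | succ n ih =>
    intro l u v hn h
    by_cases hnd : l.Nodup
    · exact ⟨l, h, hnd, le_refl _⟩
    · obtain ⟨x, p, q, s, rfl⟩ := exists_dup_split l hnd
      obtain ⟨hh, hl, hc⟩ := h
      have h' : Wk G u v (p ++ x :: s) := by
        refine ⟨?_, ?_, chain'_shortcut hc⟩
        · rw [List.head?_append] at hh ⊢
          rw [← hh]
          cases hp : p.head? <;> simp [hp]
        · rw [List.getLast?_append_of_ne_nil _ (by simp : (x :: s) ≠ [])]
          rw [List.getLast?_append_of_ne_nil _ (by simp : (x :: s) ≠ [])] at hl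
          exact hl
      obtain ⟨k, hk⟩ := closed_wt hone q.length q x (le_refl _) (by simpa using chain'_middle hc)
      have hlen : (p ++ x :: s).length ≤ n := by
        have := hn
        simp at this ⊢
        omega
      obtain ⟨l', hl', hnd', hle⟩ := ih (p ++ x :: s) hlen h'
      refine ⟨l', hl', hnd', ?_⟩
      have hW : Wt w (p ++ x :: q ++ x :: s) = Wt w (p ++ x :: s) + Wt w (x :: q ++ [x]) :=
        Wt_shortcut w p q s x
      have : (0:ℝ) ≤ Wt w (x :: q ++ [x]) := by
        rw [show x :: q ++ [x] = x :: (q ++ [x]) by simp] at hk ⊢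
        rw [hk]; positivity
      rw [hW]
      linarith


end Walks

section Dist

variable [Fintype V] (G : V → V → Prop) (w : V → V → ℝ)

/-- minimum weight over nodup walks. -/
noncomputable def dst (x y : V) : ℝ :=
  sInf {t | ∃ l, Wk G x y l ∧ l.Nodup ∧ Wt w l = t}

variable {G w}

lemma nodup_lists_finite : {l : List V | l.Nodup}.Finite := by
  classical
  have : {l : List V | l.Nodup} = Set.range (fun p : {l : List V // l.Nodup} => (p : List V)) := by
    ext l
    constructor
    · intro h; exact ⟨⟨l, h⟩, rfl⟩
    · rintro ⟨p, rfl⟩; exact p.2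
  rw [this]
  exact Set.finite_range _

lemma dstSet_finite (x y : V) : {t | ∃ l, Wk G x y l ∧ l.Nodup ∧ Wt w l = t}.Finite := by
  apply Set.Finite.subset (nodup_lists_finite.image (fun l => Wt w l))
  rintro t ⟨l, hl, hnd, rfl⟩
  exact ⟨l, hnd, rfl⟩

variable (hone : ∀ (a : V) (m : List V), (a :: m).Nodup →
    Chain' G (a :: m ++ [a]) → Wt w (a :: m ++ [a]) = 1)

include hone

lemma dstSet_nonempty {x y : V} (h : Reach G x y) :
    {t | ∃ l, Wk G x y l ∧ l.Nodup ∧ Wt w l = t}.Nonempty := by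
  obtain ⟨l, hl⟩ := h
  obtain ⟨l', hl', hnd, -⟩ := exists_nodup_wk hone l.length l (le_refl _) hl
  exact ⟨Wt w l', l', hl', hnd, rfl⟩

lemma dst_attained {x y : V} (h : Reach G x y) :
    ∃ l, Wk G x y l ∧ l.Nodup ∧ Wt w l = dst G w x y := by
  have := (dstSet_nonempty hone h).csInf_mem (dstSet_finite x y)
  exact this

lemma dst_le {x y : V} {l : List V} (h : Wk G x y l) : dst G w x y ≤ Wt w l := by
  obtain ⟨l', hl', hnd, hle⟩ := exists_nodup_wk hone l.length l (le_refl _) h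
  have : dst G w x y ≤ Wt w l' :=
    csInf_le (dstSet_finite x y).bddBelow ⟨l', hl', hnd, rfl⟩
  linarith

/-- two walks between the same endpoints differ by an integer, provided the
ends are mutually reachable. -/
lemma wk_sub_int {x y : V} {P Q : List V} (hP : Wk G x y P) (hQ : Wk G x y Q)
    (hr : Reach G y x) : ∃ k : ℤ, Wt w P - Wt w Q = k := by
  obtain ⟨R, hR⟩ := hr
  obtain ⟨P', hP', hWP⟩ := wk_compose (w := w) hP hR
  obtain ⟨Q', hQ', hWQ⟩ := wk_compose (w := w) hQ hR
  obtain ⟨k₁, hk₁⟩ := closed_int hone hP'.1 hP'.2.1 hP'.2.2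
  obtain ⟨k₂, hk₂⟩ := closed_int hone hQ'.1 hQ'.2.1 hQ'.2.2
  exact ⟨k₁ - k₂, by push_cast; rw [← hk₁, ← hk₂, hWP, hWQ] at *; ring⟩

end Dist

section Root

variable (G : V → V → Prop)

def SConn (u v : V) : Prop := Reach G u v ∧ Reach G v u

variable {G}

lemma sconn_refl (v : V) : SConn G v v := ⟨reach_refl v, reach_refl v⟩

lemma sconn_symm {u v : V} (h : SConn G u v) : SConn G v u := ⟨h.2, h.1⟩

lemma sconn_trans {u v x : V} (h₁ : SConn G u v) (h₂ : SConn G v x) : SConn G u x :=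
  ⟨reach_trans h₁.1 h₂.1, reach_trans h₂.2 h₁.2⟩

variable (G)

noncomputable def root (v : V) : V :=
  (⟨v, sconn_refl v⟩ : ∃ x, SConn G x v).choose

variable {G}

lemma root_sconn (v : V) : SConn G (root G v) v :=
  (⟨v, sconn_refl v⟩ : ∃ x, SConn G x v).choose_spec

lemma root_eq {u v : V} (h : SConn G u v) : root G u = root G v := by
  unfold root
  congr 1
  · exact funext fun x => propext ⟨fun hx => sconn_trans hx h,
      fun hx => sconn_trans hx (sconn_symm h)⟩

end Root

section Main

variable [Fintype V]

/-- the candidate 0/1 weighting. -/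
noncomputable def wgt (G : V → V → Prop) (w : V → V → ℝ) : V → V → ℝ := fun u v =>
  letI := Classical.propDecidable
  if G u v ∧ Reach G v u then
    dst G w (root G u) u + w u v - dst G w (root G u) v
  else 0

lemma wgt_pos_eq {G : V → V → Prop} {w : V → V → ℝ} {u v : V} (h : G u v ∧ Reach G v u) :
    wgt G w u v = dst G w (root G u) u + w u v - dst G w (root G u) v := by
  rw [wgt]
  exact if_pos h

lemma wgt_neg_eq {G : V → V → Prop} {w : V → V → ℝ} {u v : V} (h : ¬ (G u v ∧ Reach G v u)) :
    wgt G w u v = 0 := by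
  rw [wgt]
  exact if_neg h

variable {G : V → V → Prop} {w : V → V → ℝ}

variable (hone : ∀ (a : V) (m : List V), (a :: m).Nodup →
    Chain' G (a :: m ++ [a]) → Wt w (a :: m ++ [a]) = 1)

include hone

lemma wgt_nat {u v : V} (he : G u v) (hr : Reach G v u) :
    ∃ n : ℕ, wgt G w u v = n := by
  have hcond : G u v ∧ Reach G v u := ⟨he, hr⟩
  have hru : SConn G (root G u) u := root_sconn u
  have huv : SConn G u v := ⟨reach_of_edge he, hr⟩
  have hrv : SConn G (root G u) v := sconn_trans hru huv
  obtain ⟨l₀, hl₀, -, hWl₀⟩ := dst_attained hone hru.1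
  have hsnoc := wk_snoc (w := w) hl₀ he
  obtain ⟨Q, hQ, -, hWQ⟩ := dst_attained hone hrv.1
  have hle : dst G w (root G u) v ≤ Wt w (l₀ ++ [v]) := dst_le hone hsnoc.1
  obtain ⟨k, hk⟩ := wk_sub_int hone hsnoc.1 hQ hrv.2
  have hval : wgt G w u v = Wt w (l₀ ++ [v]) - dst G w (root G u) v := by
    rw [wgt_pos_eq hcond, ← hWl₀, hsnoc.2]
  have hge : (0:ℝ) ≤ wgt G w u v := by rw [hval]; linarith
  have hint : wgt G w u v = (k : ℝ) := by
    rw [hval, ← hWQ, hk]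
  refine ⟨k.toNat, ?_⟩
  rw [hint]
  have : 0 ≤ k := by
    rw [hint] at hge
    exact_mod_cast hge
  exact_mod_cast (Int.toNat_of_nonneg this).symm

lemma wgt_nonneg (u v : V) : 0 ≤ wgt G w u v := by
  by_cases h : G u v ∧ Reach G v u
  · obtain ⟨n, hn⟩ := wgt_nat hone h.1 h.2
    rw [hn]; positivity
  · rw [wgt_neg_eq h]

omit hone in
lemma Wt_nonneg {w' : V → V → ℝ} (hw' : ∀ a b, 0 ≤ w' a b) :
    ∀ l : List V, 0 ≤ Wt w' l
  | [] => le_refl _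
  | [_] => le_refl _
  | a :: b :: l => by
    have := Wt_nonneg hw' (b :: l)
    simp only [Wt_cons₂]
    have := hw' a b
    linarith

omit hone in
/-- all vertices of a closed walk are mutually reachable. -/
lemma reach_of_closed {a x y : V} {c : List V} (hh : c.head? = some a)
    (hl : c.getLast? = some a) (hc : Chain' G c) (hx : x ∈ c) (hy : y ∈ c) :
    Reach G x y := by
  obtain ⟨c₁, c₂, hc₁⟩ := List.append_of_mem hx
  obtain ⟨d₁, d₂, hd₁⟩ := List.append_of_mem hy
  have wxa : Wk G x a (x :: c₂) := by
    refine ⟨rfl, ?_, ?_⟩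
    · rw [← hl, hc₁, List.getLast?_append_of_ne_nil _ (by simp : (x :: c₂) ≠ [])]
    · exact hc.suffix ⟨c₁, hc₁.symm⟩
  have way : Wk G a y (d₁ ++ [y]) := by
    refine ⟨?_, by simp, ?_⟩
    · rw [← hh, hd₁, List.head?_append, List.head?_append]
      cases hd : d₁.head? <;> simp [hd]
    · refine hc.infix ?_
      refine ⟨[], d₂, ?_⟩
      rw [hd₁]; simp
  exact reach_trans ⟨_, wxa⟩ ⟨_, way⟩

omit hone in
lemma sum3 (f g k : V × V → ℝ) : ∀ L : List (V × V),
    (L.map fun p => f p + g p - k p).sum = (L.map f).sum + (L.map g).sum - (L.map k).sum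
  | [] => by simp
  | p :: L => by
    simp only [List.map_cons, List.sum_cons, sum3 f g k L]
    ring

lemma wgt_weighting
    (hwl : ∀ l : List V, l ≠ [] → l.Nodup → (∀ p ∈ l.zip (l.rotate 1), G p.1 p.2) →
      ((l.zip (l.rotate 1)).map fun p => w p.1 p.2).sum = 1) :
    ∀ l : List V, l ≠ [] → l.Nodup → (∀ p ∈ l.zip (l.rotate 1), G p.1 p.2) →
      ((l.zip (l.rotate 1)).map fun p => wgt G w p.1 p.2).sum = 1 := by
  intro l hne hnd hG
  obtain ⟨a, m, rfl⟩ : ∃ a m, l = a :: m := by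
    cases l with
    | nil => exact absurd rfl hne
    | cons a m => exact ⟨a, m, rfl⟩
  have hcc : Chain' G (a :: m ++ [a]) := (cycChain_iff G a m).1 hG
  have hch : (a :: m ++ [a]).head? = some a := by
    rw [List.cons_append]; rfl
  have hcl : (a :: m ++ [a]).getLast? = some a := List.getLast?_concat
  have hmem : ∀ x ∈ a :: m, x ∈ a :: m ++ [a] := fun x hx => List.mem_append_left _ hx
  have hkey : ∀ p ∈ (a :: m).zip ((a :: m).rotate 1),
      wgt G w p.1 p.2 = (dst G w (root G p.1) p.1 + w p.1 p.2) - dst G w (root G p.2) p.2 := by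
    rintro ⟨x, y⟩ hp
    obtain ⟨hx, hy⟩ := List.of_mem_zip hp
    rw [List.mem_rotate] at hy
    have hGxy : G x y := hG _ hp
    have hryx : Reach G y x := reach_of_closed hch hcl hcc (hmem y hy) (hmem x hx)
    have hsconn : SConn G x y := ⟨reach_of_edge hGxy, hryx⟩
    rw [wgt_pos_eq ⟨hGxy, hryx⟩, root_eq hsconn]
  rw [List.map_congr_left hkey]
  have hsplit := sum3 (fun p => dst G w (root G p.1) p.1) (fun p => w p.1 p.2)
    (fun p => dst G w (root G p.2) p.2) ((a :: m).zip ((a :: m).rotate 1))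
  rw [hsplit]
  have hlen : ((a :: m).rotate 1).length = (a :: m).length := List.length_rotate _ _
  have hfst : ((a :: m).zip ((a :: m).rotate 1)).map Prod.fst = a :: m :=
    List.map_fst_zip (by rw [hlen])
  have hsnd : ((a :: m).zip ((a :: m).rotate 1)).map Prod.snd = (a :: m).rotate 1 :=
    List.map_snd_zip (by rw [hlen])
  have e1 : ((a :: m).zip ((a :: m).rotate 1)).map (fun p => dst G w (root G p.1) p.1)
      = ((a :: m).map fun v => dst G w (root G v) v) := by
    have h1 : ((a :: m).zip ((a :: m).rotate 1)).map (fun p => dst G w (root G p.1) p.1)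
        = (((a :: m).zip ((a :: m).rotate 1)).map Prod.fst).map (fun v => dst G w (root G v) v) := by
      rw [List.map_map]
      rfl
    rw [h1, hfst]
  have e2 : ((a :: m).zip ((a :: m).rotate 1)).map (fun p => dst G w (root G p.2) p.2)
      = (((a :: m).rotate 1).map fun v => dst G w (root G v) v) := by
    have h1 : ((a :: m).zip ((a :: m).rotate 1)).map (fun p => dst G w (root G p.2) p.2)
        = (((a :: m).zip ((a :: m).rotate 1)).map Prod.snd).map (fun v => dst G w (root G v) v) := by
      rw [List.map_map]
      rfl
    rw [h1, hsnd]
  rw [e1, e2, hwl (a :: m) hne hnd hG]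
  have hperm : (((a :: m).rotate 1).map fun v => dst G w (root G v) v).sum
      = ((a :: m).map fun v => dst G w (root G v) v).sum :=
    ((List.rotate_perm (a :: m) 1).map _).sum_eq
  rw [hperm]
  ring

end Main

end ZeroOneAux


open Cyclic3 in
/-- If a finite digraph is weightable, then it admits a weighting taking values only
in `{0,1}`. -/
theorem stmt_18 {V : Type*} [Fintype V] (G : V → V → Prop) (hirr : Irreflexive G)
    (h : ∃ w : V → V → ℝ, IsWeighting G w) :
    ∃ w : V → V → ℝ, IsWeighting G w ∧ ∀ x y, G x y → w x y = 0 ∨ w x y = 1 := by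
  classical
  obtain ⟨w, hw⟩ := h
  have hwl : ∀ l : List V, l ≠ [] → l.Nodup → (∀ p ∈ l.zip (l.rotate 1), G p.1 p.2) →
      ((l.zip (l.rotate 1)).map fun p => w p.1 p.2).sum = 1 :=
    fun l h1 h2 h3 => hw l ⟨h1, h2, h3⟩
  have hone : ∀ (a : V) (m : List V), (a :: m).Nodup → List.Chain' G (a :: m ++ [a]) →
      ZeroOneAux.Wt w (a :: m ++ [a]) = 1 := by
    intro a m hnd hc
    rw [← ZeroOneAux.cycSum_eq_Wt]
    exact hwl (a :: m) (List.cons_ne_nil _ _) hnd ((ZeroOneAux.cycChain_iff G a m).2 hc)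
  have hweight := ZeroOneAux.wgt_weighting hone hwl
  refine ⟨ZeroOneAux.wgt G w, fun l hl => hweight l hl.1 hl.2.1 hl.2.2, ?_⟩
  intro x y hxy
  by_cases hr : ZeroOneAux.Reach G y x
  · obtain ⟨n, hn⟩ := ZeroOneAux.wgt_nat hone hxy hr
    obtain ⟨l₀, hl₀⟩ := hr
    obtain ⟨l, hlwk, hlnd, -⟩ := ZeroOneAux.exists_nodup_wk hone l₀.length l₀ (le_refl _) hl₀
    obtain ⟨m₁, rfl⟩ : ∃ m₁, l = y :: m₁ := by
      cases l with
      | nil => simp [ZeroOneAux.Wk] at hlwk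
      | cons a m₁ =>
        obtain ⟨hh, -, -⟩ := hlwk
        simp only [List.head?_cons, Option.some.injEq] at hh
        exact ⟨m₁, by rw [hh]⟩
    have hsnoc := ZeroOneAux.wk_snoc (w := ZeroOneAux.wgt G w) hlwk hxy
    have hchain : List.Chain' G (y :: m₁ ++ [y]) := hsnoc.1.2.2
    have hsum := hweight (y :: m₁) (List.cons_ne_nil _ _) hlnd
      ((ZeroOneAux.cycChain_iff G y m₁).2 hchain)
    rw [ZeroOneAux.cycSum_eq_Wt] at hsum
    have hW := ZeroOneAux.Wt_append_single (ZeroOneAux.wgt G w) (y :: m₁) x y hlwk.2.1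
    have hWnn := ZeroOneAux.Wt_nonneg (w' := ZeroOneAux.wgt G w)
      (fun a b => ZeroOneAux.wgt_nonneg hone a b) (y :: m₁)
    have hle : ZeroOneAux.wgt G w x y ≤ 1 := by
      rw [hW] at hsum
      linarith
    rw [hn] at hle ⊢
    have hn1 : n ≤ 1 := by exact_mod_cast hle
    interval_cases n
    · left; simp
    · right; simp
  · left
    exact ZeroOneAux.wgt_neg_eq (fun hc => hr hc.2)
end
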